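/- arXiv:2411.00292 — 8 statements merged into one kernel-verified Lean document; each statement's English description precedes it below -/
import Mathlib

section
/- Let λ₂, λ₃ be real numbers with 0 < λ₂ ≤ λ₃. The multiset {0, λ₂, λ₃} is Laplacian realizable for the path P₃ on 3 vertices if and only if λ₃ ≥ 3λ₂. -/
open Matrix

/-- `A` is a generalized Laplacian matrix for the graph `G`:  a real symmetric matrix with
negative entries on positions corresponding to edges, zero off-diagonal entries on
non-edges, and all row sums equal to zero. -/
def IsGenLap {n : ℕ} (G : SimpleGraph (Fin n)) (A : Matrix (Fin n) (Fin n) ℝ) : Prop :=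
  A.IsSymm ∧
  (∀ i j, G.Adj i j → A i j < 0) ∧
  (∀ i j, i ≠ j → ¬ G.Adj i j → A i j = 0) ∧
  (∀ i, ∑ j, A i j = 0)

open Polynomial

lemma cp3 (a b : ℝ) :
    (!![a,-a,0;-a,a+b,-b;0,-b,b] : Matrix (Fin 3) (Fin 3) ℝ).charpoly
      = X^3 - C (2*(a+b)) * X^2 + C (3*a*b) * X := by
  rw [Matrix.charpoly, Matrix.det_fin_three]
  simp [charmatrix_apply, Matrix.one_apply, C_add, C_mul, map_ofNat]
  ring

lemma factored (u v : ℝ) :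
    (X^3 - C (u+v) * X^2 + C (u*v) * X : ℝ[X]) = X * (X - C u) * (X - C v) := by
  simp [C_add, C_mul]; ring

lemma roots_factored (u v : ℝ) :
    (X * (X - C u) * (X - C v) : ℝ[X]).roots = (0 ::ₘ u ::ₘ {v}) := by
  rw [roots_mul (mul_ne_zero (mul_ne_zero X_ne_zero (X_sub_C_ne_zero u)) (X_sub_C_ne_zero v)),
    roots_mul (mul_ne_zero X_ne_zero (X_sub_C_ne_zero u)), roots_X, roots_X_sub_C, roots_X_sub_C]
  rfl

lemma genlap_mat (a b : ℝ) (ha : 0 < a) (hb : 0 < b) :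
    IsGenLap (SimpleGraph.pathGraph 3) !![a,-a,0;-a,a+b,-b;0,-b,b] := by
  refine ⟨?_, ?_, ?_, ?_⟩
  · ext i j; fin_cases i <;> fin_cases j <;> simp [Matrix.transpose]
  · intro i j hij
    rw [SimpleGraph.pathGraph_adj] at hij
    fin_cases i <;> fin_cases j <;> simp_all
  · intro i j hne hij
    rw [SimpleGraph.pathGraph_adj] at hij
    fin_cases i <;> fin_cases j <;> simp_all
  · intro i; fin_cases i <;> simp [Fin.sum_univ_three]

/-- The multiset `{0, λ₂, λ₃}` with `0 < λ₂ ≤ λ₃` is Laplacian realizable for the path `P₃`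
if and only if `λ₃ ≥ 3λ₂`. -/
theorem stmt0 (l2 l3 : ℝ) (h2 : 0 < l2) (h23 : l2 ≤ l3) :
    (∃ A : Matrix (Fin 3) (Fin 3) ℝ, IsGenLap (SimpleGraph.pathGraph 3) A ∧
      A.charpoly.roots = (0 ::ₘ l2 ::ₘ {l3})) ↔ 3 * l2 ≤ l3 := by
  constructor
  · rintro ⟨A, ⟨hsym, hadj, hnadj, hrow⟩, hroots⟩
    have hadj01 : (SimpleGraph.pathGraph 3).Adj 0 1 := by
      rw [SimpleGraph.pathGraph_adj]; left; rfl
    have hadj12 : (SimpleGraph.pathGraph 3).Adj 1 2 := by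
      rw [SimpleGraph.pathGraph_adj]; left; rfl
    have hnadj02 : ¬ (SimpleGraph.pathGraph 3).Adj 0 2 := by
      rw [SimpleGraph.pathGraph_adj]; simp [Fin.ext_iff]
    have ha : A 0 1 < 0 := hadj 0 1 hadj01
    have hb : A 1 2 < 0 := hadj 1 2 hadj12
    have h02 : A 0 2 = 0 := hnadj 0 2 (by simp [Fin.ext_iff]) hnadj02
    have h10 : A 1 0 = A 0 1 := hsym.apply 0 1
    have h21 : A 2 1 = A 1 2 := hsym.apply 1 2
    have h20 : A 2 0 = A 0 2 := hsym.apply 0 2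
    have r0 := hrow 0; have r1 := hrow 1; have r2 := hrow 2
    rw [Fin.sum_univ_three] at r0 r1 r2
    obtain ⟨a, b, hapos, hbpos, hA⟩ :
        ∃ a b : ℝ, 0 < a ∧ 0 < b ∧ A = !![a,-a,0;-a,a+b,-b;0,-b,b] := by
      refine ⟨-A 0 1, -A 1 2, by linarith, by linarith, ?_⟩
      ext i j
      fin_cases i <;> fin_cases j <;> simp <;> linarith
    rw [hA, cp3] at hroots
    have hmonic := (!![a,-a,0;-a,a+b,-b;0,-b,b] : Matrix (Fin 3) (Fin 3) ℝ).charpoly_monic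
    have hdeg := (!![a,-a,0;-a,a+b,-b;0,-b,b] : Matrix (Fin 3) (Fin 3) ℝ).charpoly_natDegree_eq_dim
    rw [cp3] at hmonic hdeg
    have hcard : Multiset.card (X^3 - C (2*(a+b)) * X^2 + C (3*a*b) * X : ℝ[X]).roots
        = (X^3 - C (2*(a+b)) * X^2 + C (3*a*b) * X : ℝ[X]).natDegree := by
      rw [hroots, hdeg]; rfl
    have heq := prod_multiset_X_sub_C_of_monic_of_roots_card_eq hmonic hcard
    rw [hroots] at heq
    simp only [Multiset.map_cons, Multiset.map_singleton, Multiset.prod_cons,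
      Multiset.prod_singleton, C_0, sub_zero] at heq
    have heq2 : (X^3 - C (2*(a+b)) * X^2 + C (3*a*b) * X : ℝ[X])
        = X^3 - C (l2+l3) * X^2 + C (l2*l3) * X := by
      rw [factored l2 l3, ← heq]; ring
    have e1 := congrArg (Polynomial.eval 1) heq2
    have e2 := congrArg (Polynomial.eval (-1)) heq2
    simp only [eval_add, eval_sub, eval_mul, eval_pow, eval_X, eval_C, one_pow] at e1 e2
    nlinarith [sq_nonneg (a-b), mul_pos hapos hbpos, mul_pos h2 (lt_of_lt_of_le h2 h23), e1, e2]
  · intro h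
    set s : ℝ := (l2+l3)/2 with hs
    have hs0 : 0 < s := by rw [hs]; linarith
    have hdisc : 0 ≤ s^2 - 4*(l2*l3)/3 := by rw [hs]; nlinarith
    set d : ℝ := Real.sqrt (s^2 - 4*(l2*l3)/3) with hd
    have hd0 : 0 ≤ d := Real.sqrt_nonneg _
    have hd2 : d^2 = s^2 - 4*(l2*l3)/3 := Real.sq_sqrt hdisc
    have hds : d < s := by
      nlinarith [mul_pos h2 (lt_of_lt_of_le h2 h23)]
    refine ⟨!![ (s+d)/2, -((s+d)/2), 0; -((s+d)/2), (s+d)/2+(s-d)/2, -((s-d)/2); 0, -((s-d)/2), (s-d)/2],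
      genlap_mat _ _ (by linarith) (by linarith), ?_⟩
    rw [cp3]
    have h1 : 2*((s+d)/2+(s-d)/2) = l2+l3 := by rw [hs]; ring
    have h2' : 3*((s+d)/2)*((s-d)/2) = l2*l3 := by nlinarith [hd2]
    rw [h1, h2', factored, roots_factored]
end

section
/- Let A be a p×p real symmetric matrix and B a q×q real symmetric matrix, each with nonpositive off-diagonal entries and all row sums equal to zero (so A𝟙 = 0 and B𝟙 = 0), with spectrum of A equal to {0, μ₂, ..., μ_p} and spectrum of B equal to {0, τ₂, ..., τ_q} (as multisets). For any ρ > 0, the (p+q)×(p+q) block matrix M = [[A + ρqI, −ρJ_{p,q}], [−ρJ_{q,p}, B + ρpI]] (where J_{p,q} is the p×q all-ones matrix) is a real symmetric matrix with nonpositive off-diagonal entries and zero row sums, and its multiset of eigenvalues is {0, ρ(p+q), μ₂ + ρq, ..., μ_p + ρq, τ₂ + ρp, ..., τ_q + ρp}. -/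
open Matrix Polynomial

section Aux

lemma my_charpoly_mul_conj {n R : Type*} [Fintype n] [DecidableEq n] [CommRing R]
    (U D V : Matrix n n R) (hUV : U * V = 1) :
    (U * D * V).charpoly = D.charpoly := by
  have hUV' : (U.map C) * (V.map C) = 1 := by
    rw [← Matrix.map_mul, hUV, Matrix.map_one _ (map_zero C) (map_one C)]
  have h1 : charmatrix (U * D * V) = (U.map C) * charmatrix D * (V.map C) := by
    simp only [charmatrix, RingHom.mapMatrix_apply, Matrix.mul_sub, Matrix.sub_mul,
      Matrix.map_mul, scalar_apply, ← Matrix.smul_one_eq_diagonal]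
    rw [Matrix.mul_smul, Matrix.mul_one, Matrix.smul_mul, hUV']
  rw [Matrix.charpoly, Matrix.charpoly, h1, det_mul, det_mul, mul_right_comm,
    ← det_mul, hUV', det_one, one_mul]

lemma my_charpoly_diagonal {n R : Type*} [Fintype n] [DecidableEq n] [CommRing R]
    (d : n → R) : (diagonal d).charpoly = ∏ i, (X - C (d i)) := by
  rw [Matrix.charpoly, charmatrix, RingHom.mapMatrix_apply, scalar_apply,
    Matrix.diagonal_map (map_zero C), diagonal_sub, det_diagonal]

lemma my_symm_charpoly {n : Type*} [Fintype n] [DecidableEq n]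
    {A : Matrix n n ℝ} (h : A.IsSymm) :
    A.charpoly = (A.charpoly.roots.map fun a => X - C a).prod := by
  have hH : A.IsHermitian := by
    rwa [Matrix.IsHermitian, conjTranspose_eq_transpose_of_trivial]
  have key : A.charpoly = ((Finset.univ.val.map hH.eigenvalues).map fun a => X - C a).prod := by
    conv_lhs => rw [hH.spectral_theorem, Unitary.conjStarAlgAut_apply]
    rw [my_charpoly_mul_conj _ _ _ (by
      exact Unitary.mul_star_self_of_mem (hH.eigenvectorUnitary).2),
      my_charpoly_diagonal]
    rw [Multiset.map_map, Finset.prod_eq_multiset_prod]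
    simp
  rw [key, roots_multiset_prod_X_sub_C]

lemma my_eval_charpoly {n R : Type*} [Fintype n] [DecidableEq n] [CommRing R]
    (M : Matrix n n R) (x : R) : M.charpoly.eval x = (x • (1 : Matrix n n R) - M).det := by
  rw [Matrix.charpoly, ← Polynomial.coe_evalRingHom, RingHom.map_det]
  congr 1
  ext i j
  rw [RingHom.mapMatrix_apply, Matrix.map_apply]
  by_cases h : i = j
  · subst h; simp [charmatrix_apply_eq, Matrix.one_apply]
  · simp [charmatrix_apply_ne _ _ _ h, Matrix.one_apply_ne h]

lemma rowsum_aux {p : ℕ} {A : Matrix (Fin p) (Fin p) ℝ} (hA : ∀ i, ∑ j, A i j = 0)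
    (c : ℝ) (i : Fin p) : ∑ k, (c • (1 : Matrix (Fin p) (Fin p) ℝ) - A) i k = c := by
  simp only [Matrix.sub_apply, Matrix.smul_apply, Matrix.one_apply, smul_eq_mul, mul_ite,
    mul_one, mul_zero, Finset.sum_sub_distrib, hA i, sub_zero, Finset.sum_ite_eq,
    Finset.mem_univ, if_pos]

lemma mul_const_aux {p q : ℕ} (S : Matrix (Fin p) (Fin p) ℝ)
    (c : ℝ) (hrow : ∀ i, ∑ k, S i k = c) (d : ℝ) :
    S * (Matrix.of fun _ _ => d : Matrix (Fin p) (Fin q) ℝ) = Matrix.of fun _ _ => c * d := by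
  ext i j
  simp only [Matrix.mul_apply, Matrix.of_apply, ← Finset.sum_mul, hrow i]

lemma const_mul_const {p q r : ℕ} (a b : ℝ) :
    (Matrix.of fun _ _ => a : Matrix (Fin q) (Fin p) ℝ) *
      (Matrix.of fun _ _ => b : Matrix (Fin p) (Fin r) ℝ) =
      (Matrix.of fun _ _ => (p : ℝ) * (a * b)) := by
  ext i j
  simp [Matrix.mul_apply]

lemma det_one_sub_const {q : ℕ} (d : ℝ) :
    (1 - (Matrix.of fun _ _ => d : Matrix (Fin q) (Fin q) ℝ)).det = 1 - (q : ℝ) * d := by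
  have h : (1 - (Matrix.of fun _ _ => d : Matrix (Fin q) (Fin q) ℝ)) =
      1 + replicateCol Unit (fun _ => -d) * replicateRow Unit (fun _ => (1 : ℝ)) := by
    ext i j
    simp [Matrix.mul_apply, Matrix.replicateCol, Matrix.replicateRow, sub_eq_add_neg]
  rw [h, det_one_add_replicateCol_mul_replicateRow]
  simp [dotProduct]
  ring

lemma scalar_det_identity {p q : ℕ} (A : Matrix (Fin p) (Fin p) ℝ) (B : Matrix (Fin q) (Fin q) ℝ)
    (hA : ∀ i, ∑ j, A i j = 0) (hB : ∀ i, ∑ j, B i j = 0) (ρ x : ℝ)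
    (hSd : ((x - ρ * q) • (1 : Matrix (Fin p) (Fin p) ℝ) - A).det ≠ 0)
    (hTd : ((x - ρ * p) • (1 : Matrix (Fin q) (Fin q) ℝ) - B).det ≠ 0)
    (h1 : x - ρ * q ≠ 0) (h2 : x - ρ * p ≠ 0) :
    (x • (1 : Matrix (Fin p ⊕ Fin q) (Fin p ⊕ Fin q) ℝ) -
        Matrix.fromBlocks (A + (ρ * (q : ℝ)) • (1 : Matrix (Fin p) (Fin p) ℝ))
          (Matrix.of fun _ _ => -ρ) (Matrix.of fun _ _ => -ρ)
          (B + (ρ * (p : ℝ)) • (1 : Matrix (Fin q) (Fin q) ℝ))).det * ((x - ρ * q) * (x - ρ * p)) =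
      (x * (x - ρ * ((p : ℝ) + (q : ℝ)))) *
        (((x - ρ * q) • (1 : Matrix (Fin p) (Fin p) ℝ) - A).det *
          ((x - ρ * p) • (1 : Matrix (Fin q) (Fin q) ℝ) - B).det) := by
  set S : Matrix (Fin p) (Fin p) ℝ := (x - ρ * q) • 1 - A with hS
  set T : Matrix (Fin q) (Fin q) ℝ := (x - ρ * p) • 1 - B with hT
  have hblock : x • (1 : Matrix (Fin p ⊕ Fin q) (Fin p ⊕ Fin q) ℝ) -
      Matrix.fromBlocks (A + (ρ * (q : ℝ)) • 1) (Matrix.of fun _ _ => -ρ)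
        (Matrix.of fun _ _ => -ρ) (B + (ρ * (p : ℝ)) • 1) =
      Matrix.fromBlocks S (Matrix.of fun _ _ => ρ) (Matrix.of fun _ _ => ρ) T := by
    ext i j
    cases i <;> cases j <;>
      simp [Matrix.fromBlocks, Matrix.one_apply, Matrix.sub_apply, hS, hT, sub_smul] <;>
      split <;> ring
  rw [hblock]
  haveI : Invertible S := S.invertibleOfIsUnitDet (isUnit_iff_ne_zero.mpr hSd)
  rw [det_fromBlocks₁₁]
  have hSrow : ∀ i, ∑ k, S i k = x - ρ * q := rowsum_aux hA _
  have hTrow : ∀ i, ∑ k, T i k = x - ρ * p := rowsum_aux hB _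
  have hinv : ⅟S * (Matrix.of fun _ _ => ρ : Matrix (Fin p) (Fin q) ℝ) =
      Matrix.of fun _ _ => ρ / (x - ρ * q) := by
    have := mul_const_aux (q := q) S _ hSrow (ρ / (x - ρ * q))
    rw [mul_div_cancel₀ _ h1] at this
    rw [← this, ← Matrix.mul_assoc, invOf_mul_self, Matrix.one_mul]
  have hmid : (Matrix.of fun _ _ => ρ : Matrix (Fin q) (Fin p) ℝ) * ⅟S *
      (Matrix.of fun _ _ => ρ : Matrix (Fin p) (Fin q) ℝ) =
      Matrix.of fun _ _ => (p : ℝ) * (ρ * (ρ / (x - ρ * q))) := by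
    rw [Matrix.mul_assoc, hinv, const_mul_const]
  rw [hmid]
  set d : ℝ := (p : ℝ) * (ρ * (ρ / (x - ρ * q))) with hd
  have hTfac : T - (Matrix.of fun _ _ => d : Matrix (Fin q) (Fin q) ℝ) =
      T * (1 - Matrix.of fun _ _ => d / (x - ρ * p)) := by
    rw [Matrix.mul_sub, Matrix.mul_one, mul_const_aux (q := q) T _ hTrow,
      mul_div_cancel₀ _ h2]
  rw [hTfac, det_mul, det_one_sub_const]
  have key : (1 - (q : ℝ) * (d / (x - ρ * p))) * ((x - ρ * q) * (x - ρ * p)) =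
      x * (x - ρ * ((p : ℝ) + (q : ℝ))) := by
    rw [hd]; linear_combination (-((p:ℝ)*q*ρ^2)) * inv_mul_cancel₀ h1 + (-((p:ℝ)*q*ρ^2) * (x - ρ * q)⁻¹ * (x - ρ * q)) * inv_mul_cancel₀ h2
  linear_combination (S.det * T.det) * key

lemma poly_identity {p q : ℕ} (A : Matrix (Fin p) (Fin p) ℝ) (B : Matrix (Fin q) (Fin q) ℝ)
    (hA : ∀ i, ∑ j, A i j = 0) (hB : ∀ i, ∑ j, B i j = 0) (ρ : ℝ) :
    (Matrix.fromBlocks (A + (ρ * (q : ℝ)) • (1 : Matrix (Fin p) (Fin p) ℝ))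
        (Matrix.of fun _ _ => -ρ) (Matrix.of fun _ _ => -ρ)
        (B + (ρ * (p : ℝ)) • (1 : Matrix (Fin q) (Fin q) ℝ))).charpoly *
      ((X - C (ρ * q)) * (X - C (ρ * p))) =
      (X * (X - C (ρ * ((p : ℝ) + (q : ℝ))))) *
        (A.charpoly.comp (X - C (ρ * q)) * B.charpoly.comp (X - C (ρ * p))) := by
  set F : ℝ[X] := A.charpoly.comp (X - C (ρ * q)) * B.charpoly.comp (X - C (ρ * p)) *
      ((X - C (ρ * q)) * (X - C (ρ * p))) with hF
  have hFm : F.Monic :=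
    (((A.charpoly_monic.comp_X_sub_C _).mul
      (B.charpoly_monic.comp_X_sub_C _)).mul ((monic_X_sub_C _).mul (monic_X_sub_C _)))
  have hFne : F ≠ 0 := hFm.ne_zero
  apply eq_of_infinite_eval_eq
  apply Set.Infinite.mono (s := {x : ℝ | ¬ F.IsRoot x})
  · intro x hx
    simp only [Set.mem_setOf_eq, IsRoot, hF, eval_mul, eval_sub, eval_X, eval_C,
      mul_ne_zero_iff] at hx
    obtain ⟨⟨hSd, hTd⟩, h1, h2⟩ := hx
    rw [eval_comp, eval_sub, eval_X, eval_C, my_eval_charpoly] at hSd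
    rw [eval_comp, eval_sub, eval_X, eval_C, my_eval_charpoly] at hTd
    simp only [Set.mem_setOf_eq, eval_mul, eval_sub, eval_X, eval_C, eval_comp,
      my_eval_charpoly]
    exact scalar_det_identity A B hA hB ρ x hSd hTd h1 h2
  · have : {x : ℝ | F.IsRoot x}.Finite := Polynomial.finite_setOf_isRoot hFne
    exact this.infinite_compl

lemma prod_X_sub_C_comp (s : Multiset ℝ) (c : ℝ) :
    ((s.map fun a => X - C a).prod).comp (X - C c) =
      (s.map fun a => X - C (a + c)).prod := by
  rw [multiset_prod_comp, Multiset.map_map]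
  congr 1
  apply Multiset.map_congr rfl
  intro a _
  simp only [Function.comp_apply, sub_comp, X_comp, C_comp, map_add]
  ring

end Aux

/-- A real symmetric matrix with nonpositive off-diagonal entries and zero row sums. -/
def IsGenLapMat {m : Type*} [Fintype m] (A : Matrix m m ℝ) : Prop :=
  A.IsSymm ∧ (∀ i j, i ≠ j → A i j ≤ 0) ∧ (∀ i, ∑ j, A i j = 0)

/-- Fiedler's join lemma: if `A` and `B` are generalized Laplacian matrices of sizes `p` and
`q` with spectra `{0} ∪ μ` and `{0} ∪ τ`, then for `ρ > 0` the block matrix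
`[[A + ρqI, -ρJ], [-ρJ, B + ρpI]]` is a generalized Laplacian matrix with spectrum
`{0, ρ(p+q)} ∪ (μ + ρq) ∪ (τ + ρp)`. -/
theorem stmt1 (p q : ℕ) (hp : 1 ≤ p) (hq : 1 ≤ q)
    (A : Matrix (Fin p) (Fin p) ℝ) (B : Matrix (Fin q) (Fin q) ℝ)
    (hA : IsGenLapMat A) (hB : IsGenLapMat B)
    (μ τ : Multiset ℝ)
    (hμ : A.charpoly.roots = 0 ::ₘ μ) (hτ : B.charpoly.roots = 0 ::ₘ τ)
    (ρ : ℝ) (hρ : 0 < ρ) :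
    IsGenLapMat
      (Matrix.fromBlocks (A + (ρ * (q : ℝ)) • (1 : Matrix (Fin p) (Fin p) ℝ))
        (Matrix.of fun _ _ => -ρ) (Matrix.of fun _ _ => -ρ)
        (B + (ρ * (p : ℝ)) • (1 : Matrix (Fin q) (Fin q) ℝ))) ∧
    (Matrix.fromBlocks (A + (ρ * (q : ℝ)) • (1 : Matrix (Fin p) (Fin p) ℝ))
        (Matrix.of fun _ _ => -ρ) (Matrix.of fun _ _ => -ρ)
        (B + (ρ * (p : ℝ)) • (1 : Matrix (Fin q) (Fin q) ℝ))).charpoly.roots =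
      0 ::ₘ (ρ * ((p : ℝ) + (q : ℝ))) ::ₘ
        (μ.map (fun x => x + ρ * (q : ℝ)) + τ.map (fun x => x + ρ * (p : ℝ))) := by
  obtain ⟨hAs, hAoff, hArow⟩ := hA
  obtain ⟨hBs, hBoff, hBrow⟩ := hB
  constructor
  · refine ⟨?_, ?_, ?_⟩
    · show _ᵀ = _
      rw [fromBlocks_transpose, transpose_add, transpose_smul, transpose_one, hAs,
        transpose_add, transpose_smul, transpose_one, hBs]
      congr 1 <;> ext i j <;> rfl
    · rintro (i | i) (j | j) hij
      · have hij' : i ≠ j := fun h => hij (by rw [h])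
        simp [Matrix.one_apply_ne hij', hAoff i j hij']
      · simp [hρ.le]
      · simp [hρ.le]
      · have hij' : i ≠ j := fun h => hij (by rw [h])
        simp [Matrix.one_apply_ne hij', hBoff i j hij']
    · rintro (i | i)
      · simp only [Fintype.sum_sum_type, fromBlocks_apply₁₁, fromBlocks_apply₁₂,
          Matrix.add_apply, Matrix.smul_apply, Matrix.one_apply, smul_eq_mul, mul_ite,
          mul_one, mul_zero, Matrix.of_apply, Finset.sum_add_distrib, hArow i,
          Finset.sum_ite_eq, Finset.mem_univ, if_pos, Finset.sum_const, Finset.card_univ,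
          Fintype.card_fin, nsmul_eq_mul]
        ring
      · simp only [Fintype.sum_sum_type, fromBlocks_apply₂₁, fromBlocks_apply₂₂,
          Matrix.add_apply, Matrix.smul_apply, Matrix.one_apply, smul_eq_mul, mul_ite,
          mul_one, mul_zero, Matrix.of_apply, Finset.sum_add_distrib, hBrow i,
          Finset.sum_ite_eq, Finset.mem_univ, if_pos, Finset.sum_const, Finset.card_univ,
          Fintype.card_fin, nsmul_eq_mul]
        ring
  · -- spectrum
    have hAfac : A.charpoly = ((0 ::ₘ μ).map fun a => X - C a).prod := by
      rw [my_symm_charpoly hAs, hμ]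
    have hBfac : B.charpoly = ((0 ::ₘ τ).map fun a => X - C a).prod := by
      rw [my_symm_charpoly hBs, hτ]
    set t : Multiset ℝ := 0 ::ₘ (ρ * ((p : ℝ) + (q : ℝ))) ::ₘ
        (μ.map (fun x => x + ρ * (q : ℝ)) + τ.map (fun x => x + ρ * (p : ℝ))) with ht
    have hM : (Matrix.fromBlocks (A + (ρ * (q : ℝ)) • (1 : Matrix (Fin p) (Fin p) ℝ))
        (Matrix.of fun _ _ => -ρ) (Matrix.of fun _ _ => -ρ)
        (B + (ρ * (p : ℝ)) • (1 : Matrix (Fin q) (Fin q) ℝ))).charpoly =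
        (t.map fun a => X - C a).prod := by
      apply mul_right_cancel₀ (b := (X - C (ρ * (q : ℝ))) * (X - C (ρ * (p : ℝ))))
        (mul_ne_zero (X_sub_C_ne_zero _) (X_sub_C_ne_zero _))
      rw [poly_identity A B hArow hBrow ρ, hAfac, hBfac, prod_X_sub_C_comp,
        prod_X_sub_C_comp, ht]
      simp only [Multiset.map_cons, Multiset.prod_cons, Multiset.map_add,
        Multiset.prod_add, Multiset.map_map, Function.comp_def, zero_add, map_zero, sub_zero]
      ring
    rw [hM, roots_multiset_prod_X_sub_C]
end

section
/- Let n ≥ 2 and let Λ = {0, λ₂, ..., λₙ} be any multiset of real numbers with λ₂, ..., λₙ all positive. Then Λ is Laplacian realizable for the complete graph Kₙ, i.e., there exists a matrix A ∈ S_L(Kₙ) whose multiset of eigenvalues is Λ. -/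
open Matrix Finset Polynomial

/-- normalization constant for Helmert vectors -/
noncomputable def cc (k : ℕ) : ℝ := (Real.sqrt (k * (k + 1)))⁻¹

/-- Helmert-type orthonormal vectors, `wv n k i` is the `i`-th entry of the `k`-th vector. -/
noncomputable def wv (n k i : ℕ) : ℝ :=
  if k = 0 then (Real.sqrt n)⁻¹
  else if i < k then cc k
  else if i = k then -(k : ℝ) * cc k
  else 0

lemma cc_mul_self {k : ℕ} (hk : k ≠ 0) : cc k * cc k = ((k : ℝ) * (k + 1))⁻¹ := by
  have h : (0:ℝ) ≤ (k : ℝ) * (k + 1) := by positivity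
  rw [cc, ← mul_inv, Real.mul_self_sqrt h]

lemma sum_range_cut {n k : ℕ} (hk : k < n) (f : ℕ → ℝ)
    (h3 : ∀ i, k < i → f i = 0) :
    ∑ i ∈ Finset.range n, f i = (∑ i ∈ Finset.range k, f i) + f k := by
  rw [← Finset.sum_range_succ]
  refine (Finset.sum_subset (Finset.range_subset_range.2 hk) ?_).symm
  intro i _ hni
  exact h3 i (by simpa using Nat.lt_of_succ_le (le_of_not_gt (fun h => hni (Finset.mem_range.2 h))))

lemma wv_colsum {n k : ℕ} (hk : k < n) (hk0 : k ≠ 0) :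
    ∑ i ∈ Finset.range n, wv n k i = 0 := by
  rw [sum_range_cut hk _ (fun i hi => by
    unfold wv; rw [if_neg hk0, if_neg (by omega), if_neg (by omega)])]
  have h1 : ∀ i ∈ Finset.range k, wv n k i = cc k := fun i hi => by
    unfold wv; rw [if_neg hk0, if_pos (Finset.mem_range.1 hi)]
  rw [Finset.sum_congr rfl h1, Finset.sum_const, Finset.card_range]
  have : wv n k k = -(k : ℝ) * cc k := by
    unfold wv; rw [if_neg hk0, if_neg (lt_irrefl k), if_pos rfl]
  rw [this, nsmul_eq_mul]; ring

lemma gram_lt {n k l : ℕ} (hl : l < n) (hkl : k < l) :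
    ∑ i ∈ Finset.range n, wv n k i * wv n l i = 0 := by
  have hl0 : l ≠ 0 := by omega
  rcases eq_or_ne k 0 with rfl | hk0
  · rw [sum_range_cut hl _ (fun i hi => by
      have : wv n l i = 0 := by unfold wv; rw [if_neg hl0, if_neg (by omega), if_neg (by omega)]
      rw [this, mul_zero])]
    have h1 : ∀ i ∈ Finset.range l, wv n 0 i * wv n l i = (Real.sqrt n)⁻¹ * cc l := by
      intro i hi
      have h2 : wv n 0 i = (Real.sqrt n)⁻¹ := by unfold wv; rw [if_pos rfl]
      have h3 : wv n l i = cc l := by unfold wv; rw [if_neg hl0, if_pos (Finset.mem_range.1 hi)]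
      rw [h2, h3]
    rw [Finset.sum_congr rfl h1, Finset.sum_const, Finset.card_range]
    have h2 : wv n 0 l = (Real.sqrt n)⁻¹ := by unfold wv; rw [if_pos rfl]
    have h3 : wv n l l = -(l : ℝ) * cc l := by
      unfold wv; rw [if_neg hl0, if_neg (lt_irrefl l), if_pos rfl]
    rw [h2, h3, nsmul_eq_mul]; ring
  · have hkn : k < n := by omega
    rw [sum_range_cut hkn _ (fun i hi => by
      have : wv n k i = 0 := by unfold wv; rw [if_neg hk0, if_neg (by omega), if_neg (by omega)]
      rw [this, zero_mul])]
    have h1 : ∀ i ∈ Finset.range k, wv n k i * wv n l i = cc k * cc l := by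
      intro i hi
      have hik := Finset.mem_range.1 hi
      have h2 : wv n k i = cc k := by unfold wv; rw [if_neg hk0, if_pos hik]
      have h3 : wv n l i = cc l := by unfold wv; rw [if_neg hl0, if_pos (by omega)]
      rw [h2, h3]
    rw [Finset.sum_congr rfl h1, Finset.sum_const, Finset.card_range]
    have h2 : wv n k k = -(k : ℝ) * cc k := by
      unfold wv; rw [if_neg hk0, if_neg (lt_irrefl k), if_pos rfl]
    have h3 : wv n l k = cc l := by unfold wv; rw [if_neg hl0, if_pos hkl]
    rw [h2, h3, nsmul_eq_mul]; ring

lemma gram_nat {n k l : ℕ} (hn : 1 ≤ n) (hk : k < n) (hl : l < n) :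
    ∑ i ∈ Finset.range n, wv n k i * wv n l i = if k = l then 1 else 0 := by
  rcases lt_trichotomy k l with h | rfl | h
  · rw [if_neg (by omega), gram_lt hl h]
  · rw [if_pos rfl]
    rcases eq_or_ne k 0 with rfl | hk0
    · have h1 : ∀ i ∈ Finset.range n, wv n 0 i * wv n 0 i = (Real.sqrt n)⁻¹ * (Real.sqrt n)⁻¹ := by
        intro i _
        have h2 : wv n 0 i = (Real.sqrt n)⁻¹ := by unfold wv; rw [if_pos rfl]
        rw [h2]
      rw [Finset.sum_congr rfl h1, Finset.sum_const, Finset.card_range, nsmul_eq_mul, ← mul_inv,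
        Real.mul_self_sqrt (Nat.cast_nonneg n)]
      have hn0 : (0:ℝ) < (n:ℝ) := by exact_mod_cast hn
      exact mul_inv_cancel₀ hn0.ne'
    · rw [sum_range_cut hk _ (fun i hi => by
        have : wv n k i = 0 := by unfold wv; rw [if_neg hk0, if_neg (by omega), if_neg (by omega)]
        rw [this, zero_mul])]
      have h1 : ∀ i ∈ Finset.range k, wv n k i * wv n k i = cc k * cc k := by
        intro i hi
        have h2 : wv n k i = cc k := by unfold wv; rw [if_neg hk0, if_pos (Finset.mem_range.1 hi)]
        rw [h2]
      rw [Finset.sum_congr rfl h1, Finset.sum_const, Finset.card_range]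
      have h2 : wv n k k = -(k : ℝ) * cc k := by
        unfold wv; rw [if_neg hk0, if_neg (lt_irrefl k), if_pos rfl]
      rw [h2, nsmul_eq_mul]
      have h3 : (k:ℝ) * (cc k * cc k) + -(k:ℝ) * cc k * (-(k:ℝ) * cc k)
          = ((k:ℝ) * ((k:ℝ)+1)) * (cc k * cc k) := by ring
      rw [h3, cc_mul_self hk0, mul_inv_cancel₀ (by
        have : (0:ℝ) < (k:ℝ) := by exact_mod_cast Nat.pos_of_ne_zero hk0
        positivity)]
  · rw [if_neg (by omega)]
    have := gram_lt hk h
    calc ∑ i ∈ Finset.range n, wv n k i * wv n l i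
        = ∑ i ∈ Finset.range n, wv n l i * wv n k i := by
          exact Finset.sum_congr rfl fun i _ => mul_comm _ _
      _ = 0 := this

lemma telescope {a : ℕ} : ∀ {n : ℕ}, a ≤ n →
    ∑ k ∈ Finset.Ico a n, (((k:ℝ))⁻¹ - ((k:ℝ) + 1)⁻¹) = (a:ℝ)⁻¹ - (n:ℝ)⁻¹ := by
  intro n
  induction n with
  | zero => intro h; interval_cases a; simp
  | succ n ih =>
    intro h
    rcases eq_or_lt_of_le h with rfl | h'
    · simp
    · have han : a ≤ n := by omega
      rw [Finset.sum_Ico_succ_top han, ih han]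
      push_cast
      ring

lemma charpoly_conj {n : ℕ} (P D : Matrix (Fin n) (Fin n) ℝ) (h : P * Pᵀ = 1) :
    (P * D * Pᵀ).charpoly = D.charpoly := by
  have hmap : P.map Polynomial.C * Pᵀ.map Polynomial.C = 1 := by
    rw [← Matrix.map_mul, h, Matrix.map_one _ (map_zero _) (map_one _)]
  have hcm : charmatrix (P * D * Pᵀ) = P.map Polynomial.C * charmatrix D * Pᵀ.map Polynomial.C := by
    unfold charmatrix
    have hsc : (Matrix.scalar (Fin n)) (X : ℝ[X]) = (X : ℝ[X]) • (1 : Matrix (Fin n) (Fin n) ℝ[X]) := by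
      rw [smul_eq_diagonal_mul]
      simp [Matrix.scalar]
    rw [mul_sub, sub_mul]
    congr 1
    · rw [hsc]
      rw [Matrix.mul_smul, Matrix.mul_one, Matrix.smul_mul, hmap]
    · have : (Polynomial.C : ℝ →+* ℝ[X]).mapMatrix (P * D * Pᵀ)
          = P.map Polynomial.C * ((Polynomial.C : ℝ →+* ℝ[X]).mapMatrix D) * Pᵀ.map Polynomial.C := by
        simp only [RingHom.mapMatrix_apply, Matrix.map_mul]
      rw [this]
  rw [Matrix.charpoly, Matrix.charpoly, hcm, Matrix.det_mul, Matrix.det_mul, mul_right_comm,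
    ← Matrix.det_mul, hmap, Matrix.det_one, one_mul]

lemma charpoly_diag {n : ℕ} (d : Fin n → ℝ) :
    (Matrix.diagonal d).charpoly = ∏ i, (X - Polynomial.C (d i)) := by
  have : charmatrix (Matrix.diagonal d) = Matrix.diagonal (fun i => X - Polynomial.C (d i)) := by
    ext i j
    rcases eq_or_ne i j with rfl | hij
    · rw [charmatrix_apply_eq, Matrix.diagonal_apply_eq, Matrix.diagonal_apply_eq]
    · rw [charmatrix_apply_ne _ _ _ hij, Matrix.diagonal_apply_ne _ hij,
        Matrix.diagonal_apply_ne _ hij, map_zero, neg_zero]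
  rw [Matrix.charpoly, this, Matrix.det_diagonal]



/-- For `n ≥ 2`, any multiset `{0, λ₂, …, λₙ}` with all `λᵢ` positive is Laplacian realizable
for the complete graph `Kₙ`. -/
theorem stmt2 (n : ℕ) (hn : 2 ≤ n) (lam : Multiset ℝ)
    (hcard : Multiset.card lam = n - 1) (hpos : ∀ x ∈ lam, 0 < x) :
    ∃ A : Matrix (Fin n) (Fin n) ℝ, IsGenLap (⊤ : SimpleGraph (Fin n)) A ∧
      A.charpoly.roots = 0 ::ₘ lam := by
  classical
  obtain ⟨m, rfl⟩ : ∃ m, n = m + 1 := ⟨n - 1, by omega⟩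
  set l : List ℝ := lam.sort (· ≥ ·) with hldef
  have hl_coe : (l : Multiset ℝ) = lam := Multiset.sort_eq _ _
  have hl_sorted : l.Pairwise (· ≥ ·) := Multiset.pairwise_sort _ _
  have hl_len : l.length = m := by
    have := congrArg Multiset.card hl_coe
    simpa [hcard] using this
  set dd : ℕ → ℝ := fun k => if k = 0 then 0 else l.getD (k - 1) 0 with hdd
  have dd_get : ∀ (k : ℕ) (_ : 1 ≤ k) (h2 : k ≤ m), dd k = l.get ⟨k - 1, by omega⟩ := by
    intro k h1 h2
    have hlt : k - 1 < l.length := by omega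
    simp only [hdd, if_neg (by omega : ¬ k = 0)]
    rw [List.getD_eq_getElem l 0 hlt]
    rfl
  have dd_mem : ∀ k, 1 ≤ k → k ≤ m → dd k ∈ lam := by
    intro k h1 h2
    rw [dd_get k h1 h2]
    have key : ∀ s : Multiset ℝ, (l : Multiset ℝ) = s → l.get ⟨k - 1, by omega⟩ ∈ s := by
      rintro s rfl; exact Multiset.mem_coe.2 (List.get_mem _ _)
    exact key lam hl_coe
  have dd_pos : ∀ k, 1 ≤ k → k ≤ m → 0 < dd k := fun k h1 h2 => hpos _ (dd_mem k h1 h2)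
  have dd_mono : ∀ j k, 1 ≤ j → j ≤ k → k ≤ m → dd k ≤ dd j := by
    intro j k h1 h2 h3
    rcases eq_or_lt_of_le h2 with rfl | hlt
    · exact le_refl _
    · rw [dd_get j h1 (by omega), dd_get k (by omega) h3]
      refine hl_sorted.rel_get_of_lt ?_
      rw [Fin.mk_lt_mk]
      omega
  set N := m + 1 with hNdef
  set d : Fin N → ℝ := fun i => dd i with hd
  set H : Matrix (Fin N) (Fin N) ℝ := Matrix.of fun i k => wv N k i with hH
  have hHtH : Hᵀ * H = 1 := by
    ext k l'
    rw [Matrix.mul_apply]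
    simp only [hH, Matrix.transpose_apply, Matrix.of_apply, Matrix.one_apply]
    rw [Fin.sum_univ_eq_sum_range (fun i => wv N k i * wv N l' i) N]
    rw [gram_nat (by omega) k.isLt l'.isLt]
    simp [Fin.val_inj]
  have hHHt : H * Hᵀ = 1 := mul_eq_one_comm.mp hHtH
  set A := H * Matrix.diagonal d * Hᵀ with hA
  have hA_entry : ∀ i j : Fin N,
      A i j = ∑ k ∈ Finset.range N, wv N k i * dd k * wv N k j := by
    intro i j
    rw [hA, Matrix.mul_apply]
    simp only [Matrix.mul_diagonal, Matrix.transpose_apply, hH, Matrix.of_apply, hd]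
    rw [Fin.sum_univ_eq_sum_range (fun k => wv N k i * dd k * wv N k j) N]
  have key : ∀ i j : Fin N, (i : ℕ) < (j : ℕ) →
      (∑ k ∈ Finset.range N, wv N k i * dd k * wv N k j) < 0 := by
    intro i j hij
    set jn := (j : ℕ) with hjn
    have hjn1 : 1 ≤ jn := by omega
    have hjnm : jn ≤ m := by have := j.isLt; omega
    set T : ℕ → ℝ := fun k => wv N k i * dd k * wv N k j with hT
    have hT0 : ∀ k, k < jn → T k = 0 := by
      intro k hk
      rcases eq_or_ne k 0 with rfl | hk0
      · simp [hT, hdd]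
      · have : wv N k j = 0 := by
          unfold wv; rw [if_neg hk0, if_neg (by omega), if_neg (by omega)]
        simp [hT, this]
    have hsplit : ∑ k ∈ Finset.range N, T k = ∑ k ∈ Finset.Ico jn N, T k := by
      refine (Finset.sum_subset (fun x hx => Finset.mem_range.2 (Finset.mem_Ico.1 hx).2) ?_).symm
      intro x hx hnx
      exact hT0 x (by
        rcases Nat.lt_or_ge x jn with h | h
        · exact h
        · exact absurd (Finset.mem_Ico.2 ⟨h, Finset.mem_range.1 hx⟩) hnx)
    have hbot : ∑ k ∈ Finset.Ico jn N, T k = T jn + ∑ k ∈ Finset.Ico (jn + 1) N, T k :=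
      Finset.sum_eq_sum_Ico_succ_bot (by omega) T
    have hTjn : T jn = -(dd jn * ((jn : ℝ) + 1)⁻¹) := by
      have hjn0 : jn ≠ 0 := by omega
      have h1 : wv N jn i = cc jn := by unfold wv; rw [if_neg hjn0, if_pos hij]
      have h2 : wv N jn jn = -(jn : ℝ) * cc jn := by
        unfold wv; rw [if_neg hjn0, if_neg (lt_irrefl jn), if_pos rfl]
      have hj0 : (0:ℝ) < (jn:ℝ) := by exact_mod_cast hjn1
      have h3 : T jn = -(dd jn * ((jn:ℝ) * ((jn:ℝ) * ((jn:ℝ)+1))⁻¹)) := by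
        rw [hT]; simp only [h1, h2]; rw [← hjn, h2]
        rw [← cc_mul_self hjn0]; ring
      rw [h3]
      congr 2
      rw [mul_inv]
      rw [← mul_assoc, mul_inv_cancel₀ hj0.ne', one_mul]
    have htail : ∀ k ∈ Finset.Ico (jn + 1) N,
        T k ≤ dd jn * (((k:ℝ))⁻¹ - ((k:ℝ) + 1)⁻¹) := by
      intro k hk
      obtain ⟨hk1, hk2⟩ := Finset.mem_Ico.1 hk
      have hk0 : k ≠ 0 := by omega
      have h1 : wv N k i = cc k := by unfold wv; rw [if_neg hk0, if_pos (by omega)]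
      have h2 : wv N k j = cc k := by unfold wv; rw [if_neg hk0, if_pos (by omega)]
      have hkpos : (0:ℝ) < (k:ℝ) := by exact_mod_cast (by omega : 0 < k)
      have hinv : cc k * cc k = ((k:ℝ))⁻¹ - ((k:ℝ) + 1)⁻¹ := by
        rw [cc_mul_self hk0]
        field_simp
        ring
      have hTk : T k = dd k * (((k:ℝ))⁻¹ - ((k:ℝ) + 1)⁻¹) := by
        rw [hT]; simp only [h1, h2]; rw [← hinv]; ring
      rw [hTk]
      have hnonneg : (0:ℝ) ≤ ((k:ℝ))⁻¹ - ((k:ℝ) + 1)⁻¹ := by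
        rw [sub_nonneg]
        exact inv_anti₀ hkpos (by linarith)
      exact mul_le_mul_of_nonneg_right (dd_mono jn k hjn1 (by omega) (by omega)) hnonneg
    have hsum_tail : ∑ k ∈ Finset.Ico (jn + 1) N, T k
        ≤ dd jn * (((jn:ℝ) + 1)⁻¹ - ((N:ℝ))⁻¹) := by
      calc ∑ k ∈ Finset.Ico (jn + 1) N, T k
          ≤ ∑ k ∈ Finset.Ico (jn + 1) N, dd jn * (((k:ℝ))⁻¹ - ((k:ℝ) + 1)⁻¹) :=
            Finset.sum_le_sum htail
        _ = dd jn * ∑ k ∈ Finset.Ico (jn + 1) N, (((k:ℝ))⁻¹ - ((k:ℝ) + 1)⁻¹) := by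
            rw [Finset.mul_sum]
        _ = dd jn * (((jn:ℝ) + 1)⁻¹ - ((N:ℝ))⁻¹) := by
            rw [telescope (by omega)]
            push_cast
            ring_nf
    have hfinal : ∑ k ∈ Finset.range N, T k ≤ -(dd jn * ((N:ℝ))⁻¹) := by
      rw [hsplit, hbot, hTjn]
      have := hsum_tail
      linarith
    have hddpos : 0 < dd jn := dd_pos jn hjn1 hjnm
    have hNpos : (0:ℝ) < ((N:ℝ))⁻¹ := by
      have : (0:ℝ) < (N:ℝ) := by exact_mod_cast (by omega : 0 < N)
      positivity
    calc ∑ k ∈ Finset.range N, T k ≤ -(dd jn * ((N:ℝ))⁻¹) := hfinal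
      _ < 0 := by nlinarith
  refine ⟨A, ⟨?_, ?_, ?_, ?_⟩, ?_⟩
  · -- symmetric
    show Aᵀ = A
    rw [hA, Matrix.transpose_mul, Matrix.transpose_mul, Matrix.transpose_transpose,
      Matrix.diagonal_transpose, Matrix.mul_assoc]
  · -- negativity on edges
    intro i j hadj
    have hne : i ≠ j := hadj.ne
    have hne' : (i:ℕ) ≠ (j:ℕ) := fun h => hne (Fin.val_inj.1 h)
    rcases Nat.lt_or_ge (i:ℕ) (j:ℕ) with h | h
    · rw [hA_entry]; exact key i j h
    · have h' : (j:ℕ) < (i:ℕ) := by omega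
      rw [hA_entry]
      have : ∑ k ∈ Finset.range N, wv N k i * dd k * wv N k j
          = ∑ k ∈ Finset.range N, wv N k j * dd k * wv N k i :=
        Finset.sum_congr rfl fun k _ => by ring
      rw [this]
      exact key j i h'
  · -- no nonedges
    intro i j hne hnadj
    exact absurd (by simpa using hne) hnadj
  · -- row sums
    intro i
    have h1 : ∀ j : Fin N, A i j = ∑ k ∈ Finset.range N, wv N k i * dd k * wv N k j :=
      hA_entry i
    calc ∑ j : Fin N, A i j
        = ∑ j : Fin N, ∑ k ∈ Finset.range N, wv N k i * dd k * wv N k j :=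
          Finset.sum_congr rfl fun j _ => h1 j
      _ = ∑ k ∈ Finset.range N, ∑ j : Fin N, wv N k i * dd k * wv N k j := Finset.sum_comm
      _ = 0 := by
          refine Finset.sum_eq_zero ?_
          intro k hk
          rcases eq_or_ne k 0 with rfl | hk0
          · simp [hdd]
          · have : ∑ j : Fin N, wv N k i * dd k * wv N k j
                = wv N k i * dd k * ∑ j : Fin N, wv N k j := by
              rw [Finset.mul_sum]
            rw [this]
            have : ∑ j : Fin N, wv N k j = 0 := by
              rw [Fin.sum_univ_eq_sum_range (fun j => wv N k j) N]
              exact wv_colsum (Finset.mem_range.1 hk) hk0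
            rw [this, mul_zero]
  · -- roots of charpoly
    rw [hA, charpoly_conj H _ hHHt, charpoly_diag d]
    rw [Finset.prod_eq_multiset_prod]
    have hmm : Multiset.map (fun i => X - Polynomial.C (d i)) Finset.univ.val
        = Multiset.map (fun a => X - Polynomial.C a) (Finset.univ.val.map d) := by
      rw [Multiset.map_map]
      rfl
    rw [hmm, Polynomial.roots_multiset_prod_X_sub_C]
    -- now: Finset.univ.val.map d = 0 ::ₘ lam
    rw [Fin.univ_def]
    show ((List.finRange N : Multiset (Fin N)).map d) = 0 ::ₘ lam
    rw [Multiset.map_coe, ← List.ofFn_eq_map, List.ofFn_succ]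
    have hd0 : d 0 = 0 := by simp [hd, hdd]
    have hdsucc : (fun i : Fin m => d i.succ) = fun i : Fin m => l.getD (i : ℕ) 0 := by
      funext i
      simp only [hd, hdd, Fin.val_succ]
      rw [if_neg (by omega)]
      norm_num
    rw [hd0, hdsucc, ← Multiset.cons_coe]
    congr 1
    rw [← hl_coe]
    congr 1
    have : (fun i : Fin m => l.getD (i : ℕ) 0) =
        fun i : Fin m => l.get (Fin.cast hl_len.symm i) := by
      funext i
      have hlt : (i : ℕ) < l.length := by omega
      rw [List.getD_eq_getElem l 0 hlt]
      rfl
    rw [this]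
    subst hl_len
    simp only [Fin.cast_refl, Fin.coe_castSucc]
    exact List.ofFn_get l
end

section
/- Let G be a connected simple graph on n ≥ 2 vertices. If every multiset {0, λ₂, ..., λₙ} with λ₂, ..., λₙ positive real numbers is Laplacian realizable for G, then G is the complete graph Kₙ. -/
open Matrix

open Polynomial in
/-- An eigenvalue (with eigenvector) of a matrix is a root of its characteristic polynomial. -/
lemma eval_charpoly_eq_zero {n : ℕ} (A : Matrix (Fin n) (Fin n) ℝ) (μ : ℝ)
    (v : Fin n → ℝ) (hv : v ≠ 0) (hAv : A *ᵥ v = μ • v) : A.charpoly.eval μ = 0 := by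
  have hmap : (charmatrix A).map (evalRingHom μ) = Matrix.diagonal (fun _ => μ) - A := by
    ext i j
    by_cases hij : i = j
    · subst hij
      simp [charmatrix_apply_eq, Matrix.diagonal_apply_eq]
    · simp [charmatrix_apply_ne _ _ _ hij, Matrix.diagonal_apply_ne _ hij]
  have hdet : (Matrix.diagonal (fun _ : Fin n => μ) - A).det = 0 := by
    rw [← Matrix.exists_mulVec_eq_zero_iff]
    refine ⟨v, hv, ?_⟩
    rw [Matrix.sub_mulVec, hAv]
    ext i
    simp [Matrix.mulVec_diagonal]
  have := (RingHom.map_det (evalRingHom μ) (charmatrix A)).symm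
  rw [RingHom.mapMatrix_apply, hmap, hdet] at this
  simpa [Matrix.charpoly] using this.symm

/-- If a connected graph `G` on `n ≥ 2` vertices realizes every multiset `{0, λ₂, …, λₙ}`
with the `λᵢ` positive by a generalized Laplacian matrix, then `G` is the complete graph. -/
theorem stmt3 (n : ℕ) (hn : 2 ≤ n) (G : SimpleGraph (Fin n)) (hconn : G.Connected)
    (h : ∀ lam : Multiset ℝ, Multiset.card lam = n - 1 → (∀ x ∈ lam, 0 < x) →
      ∃ A : Matrix (Fin n) (Fin n) ℝ, IsGenLap G A ∧ A.charpoly.roots = 0 ::ₘ lam) :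
    G = ⊤ := by
  obtain ⟨A, ⟨hsym, hneg, hzero, hrow⟩, hroots⟩ :=
    h (Multiset.replicate (n - 1) 1) (Multiset.card_replicate _ _)
      (fun x hx => by rw [Multiset.eq_of_mem_replicate hx]; norm_num)
  have hherm : A.IsHermitian := by
    rw [Matrix.IsHermitian, Matrix.conjTranspose_eq_transpose_of_trivial]
    exact hsym
  -- every eigenvalue is 0 or 1
  have heig : ∀ i, hherm.eigenvalues i = 0 ∨ hherm.eigenvalues i = 1 := by
    intro i
    have hv : (⇑(hherm.eigenvectorBasis i) : Fin n → ℝ) ≠ 0 := by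
      intro hc
      have := hherm.eigenvectorBasis.orthonormal.ne_zero i
      apply this
      ext j
      exact congrFun hc j
    have hroot : A.charpoly.eval (hherm.eigenvalues i) = 0 :=
      eval_charpoly_eq_zero A _ _ hv (hherm.mulVec_eigenvectorBasis i)
    have hmem : hherm.eigenvalues i ∈ A.charpoly.roots := by
      rw [Polynomial.mem_roots (A.charpoly_monic.ne_zero)]
      exact hroot
    rw [hroots, Multiset.mem_cons] at hmem
    rcases hmem with h0 | h1
    · exact Or.inl h0
    · exact Or.inr (Multiset.eq_of_mem_replicate h1)
  -- A is idempotent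
  have hidem : A * A = A := by
    have hU : star (hherm.eigenvectorUnitary : Matrix (Fin n) (Fin n) ℝ) *
        (hherm.eigenvectorUnitary : Matrix (Fin n) (Fin n) ℝ) = 1 :=
      Unitary.coe_star_mul_self _
    have hD : (Matrix.diagonal ((RCLike.ofReal : ℝ → ℝ) ∘ hherm.eigenvalues) : Matrix (Fin n) (Fin n) ℝ) *
        Matrix.diagonal ((RCLike.ofReal : ℝ → ℝ) ∘ hherm.eigenvalues) =
        Matrix.diagonal ((RCLike.ofReal : ℝ → ℝ) ∘ hherm.eigenvalues) := by
      rw [Matrix.diagonal_mul_diagonal]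
      have hfun : (fun i => ((RCLike.ofReal : ℝ → ℝ) ∘ hherm.eigenvalues) i *
          ((RCLike.ofReal : ℝ → ℝ) ∘ hherm.eigenvalues) i) = ((RCLike.ofReal : ℝ → ℝ) ∘ hherm.eigenvalues) := by
        funext i
        rcases heig i with h0 | h0 <;> simp [h0]
      rw [hfun]
    conv_lhs => rw [hherm.spectral_theorem]
    conv_rhs => rw [hherm.spectral_theorem]
    rw [Unitary.conjStarAlgAut_apply]
    rw [show ∀ U D V : Matrix (Fin n) (Fin n) ℝ, (U * D * V) * (U * D * V) =
      U * D * (V * U) * D * V by intros; noncomm_ring]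
    rw [hU, Matrix.mul_one, Matrix.mul_assoc _ _ (Matrix.diagonal _), hD]
  -- off-diagonal entries are nonpositive
  have hnonpos : ∀ i j : Fin n, i ≠ j → A i j ≤ 0 := by
    intro i j hij
    by_cases hadj : G.Adj i j
    · exact le_of_lt (hneg i j hadj)
    · exact le_of_eq (hzero i j hij hadj)
  -- nonadjacent distinct vertices have no common neighbor
  have nocommon : ∀ i j : Fin n, i ≠ j → ¬ G.Adj i j →
      ∀ k, G.Adj i k → G.Adj k j → False := by
    intro i j hij hnadj k hik hkj
    have hAij : A i j = 0 := hzero i j hij hnadj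
    have hsum : ∑ l, A i l * A l j = 0 := by
      have := congrFun (congrFun hidem i) j
      rw [Matrix.mul_apply] at this
      rw [this, hAij]
    have hterm : ∀ l ∈ Finset.univ, 0 ≤ A i l * A l j := by
      intro l _
      by_cases hli : l = i
      · subst hli; rw [hsym.apply, hAij]  -- A l j with l = i : A i j = 0
        simp [hAij]
      by_cases hlj : l = j
      · subst hlj; rw [hAij]; simp
      · nlinarith [hnonpos i l (Ne.symm hli), hnonpos l j hlj]
    have hpos : 0 < A i k * A k j :=
      mul_pos_of_neg_of_neg (hneg i k hik) (hneg k j hkj)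
    have hle : A i k * A k j ≤ ∑ l, A i l * A l j :=
      Finset.single_le_sum hterm (Finset.mem_univ k)
    rw [hsum] at hle
    exact absurd (lt_of_lt_of_le hpos hle) (lt_irrefl 0)
  -- connectivity: walk induction gives adjacency of all distinct pairs
  have key : ∀ (i j : Fin n), ∀ _ : G.Walk i j, i ≠ j → G.Adj i j := by
    intro i j p
    induction p with
    | nil => intro hne; exact absurd rfl hne
    | @cons u v w hadj p ih =>
      intro hne
      by_cases hvw : v = w
      · subst hvw; exact hadj
      · have hvwadj := ih hvw
        by_contra hnadj
        exact nocommon u w hne hnadj v hadj hvwadj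
  ext i j
  simp only [SimpleGraph.top_adj]
  constructor
  · exact fun hadj => hadj.ne
  · intro hne
    obtain ⟨p⟩ := hconn.preconnected i j
    exact key i j p hne
end

section
/- Let G be a connected bipartite simple graph on n ≥ 2 vertices and let A ∈ S_L(G). Then the largest eigenvalue of A is simple, i.e., its eigenspace is one-dimensional. -/
open Matrix Polynomial

lemma charpoly_eval_eq' {n : ℕ} (A : Matrix (Fin n) (Fin n) ℝ) (ν : ℝ) :
    A.charpoly.eval ν = (ν • (1 : Matrix (Fin n) (Fin n) ℝ) - A).det := by
  have h : A.charpoly.eval ν = ((charmatrix A).map (Polynomial.eval ν)).det := by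
    rw [Matrix.charpoly]
    exact (RingHom.map_det (Polynomial.evalRingHom ν) (charmatrix A)).symm ▸ rfl
  rw [h]
  congr 1
  ext i j
  by_cases hij : i = j
  · subst hij
    simp [charmatrix_apply_eq, Matrix.smul_apply, Matrix.one_apply]
  · simp [charmatrix_apply_ne _ _ _ hij, Matrix.smul_apply, Matrix.one_apply, hij]

/-- key lemma: for the conjugated matrix `B` (symmetric, nonnegative off-diagonal supported on
a connected graph, with all charpoly roots at most `μ` as recorded by `hub`), any nonzero
eigenvector for `μ` has all entries nonzero. -/
lemma entries_ne_zero {n : ℕ} (G : SimpleGraph (Fin n)) (hconn : G.Connected)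
    (B : Matrix (Fin n) (Fin n) ℝ) (hBsymm : B.IsHermitian)
    (hBpos : ∀ i j, G.Adj i j → 0 < B i j)
    (hBz : ∀ i j, i ≠ j → ¬ G.Adj i j → B i j = 0)
    (μ : ℝ)
    (hub : ∀ (ν : ℝ) (v : Fin n → ℝ), v ≠ 0 → B *ᵥ v = ν • v → ν ≤ μ)
    (x : Fin n → ℝ) (hx : x ≠ 0) (hxe : B *ᵥ x = μ • x) :
    ∀ i, x i ≠ 0 := by
  classical
  have hBnn : ∀ i j, i ≠ j → 0 ≤ B i j := by
    intro i j hij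
    by_cases h : G.Adj i j
    · exact (hBpos i j h).le
    · exact le_of_eq (hBz i j hij h).symm
  -- the matrix M := μ • 1 - B is positive semidefinite
  set M : Matrix (Fin n) (Fin n) ℝ := μ • (1 : Matrix (Fin n) (Fin n) ℝ) - B with hM
  have hMH : M.IsHermitian := by
    rw [Matrix.IsHermitian]
    ext i j
    simp only [Matrix.conjTranspose_apply, star_trivial, hM, Matrix.sub_apply,
      Matrix.smul_apply, Matrix.one_apply, smul_eq_mul]
    have : B j i = B i j := by
      conv_lhs => rw [← hBsymm]
      simp [Matrix.conjTranspose_apply]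
    rw [this]
    by_cases h : i = j
    · subst h; simp
    · simp [h, Ne.symm h]
  have hMpsd : M.PosSemidef := by
    apply hMH.posSemidef_iff_eigenvalues_nonneg.mpr
    intro i
    set α := hMH.eigenvalues i with hα
    have hv := hMH.mulVec_eigenvectorBasis i
    set v : Fin n → ℝ := ⇑(hMH.eigenvectorBasis i) with hvdef
    have hvne : v ≠ 0 := by
      intro h0
      have := hMH.eigenvectorBasis.orthonormal.ne_zero i
      apply this
      ext j
      exact congrFun h0 j
    have hBv : B *ᵥ v = (μ - α) • v := by
      have : M *ᵥ v = α • v := hv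
      rw [hM, Matrix.sub_mulVec, Matrix.smul_mulVec, Matrix.one_mulVec] at this
      have := sub_eq_iff_eq_add.mp this
      funext j
      have hj := congrFun this j
      simp only [Pi.smul_apply, Pi.add_apply, smul_eq_mul, Pi.sub_apply] at hj ⊢
      linarith
    have := hub (μ - α) v hvne hBv
    show (0:ℝ) ≤ α
    linarith
  -- the entrywise absolute value of x is also an eigenvector
  set y : Fin n → ℝ := fun i => |x i| with hy
  have hMx : M *ᵥ x = 0 := by
    rw [hM, Matrix.sub_mulVec, Matrix.smul_mulVec, Matrix.one_mulVec, hxe, sub_self]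
  have hquad : y ⬝ᵥ M *ᵥ y ≤ 0 := by
    have hxq : x ⬝ᵥ M *ᵥ x = 0 := by rw [hMx, dotProduct_zero]
    have hyy : y ⬝ᵥ y = x ⬝ᵥ x := by
      simp [hy, dotProduct, abs_mul_abs_self]
    have hBq : x ⬝ᵥ B *ᵥ x ≤ y ⬝ᵥ B *ᵥ y := by
      have hlhs : x ⬝ᵥ B *ᵥ x = ∑ i, ∑ j, x i * (B i j * x j) := by
        simp [dotProduct, Matrix.mulVec, Finset.mul_sum]
      have hrhs : y ⬝ᵥ B *ᵥ y = ∑ i, ∑ j, y i * (B i j * y j) := by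
        simp [dotProduct, Matrix.mulVec, Finset.mul_sum]
      rw [hlhs, hrhs]
      apply Finset.sum_le_sum
      intro i _
      apply Finset.sum_le_sum
      intro j _
      rcases eq_or_ne i j with rfl | hij
      · have hxy : x i * x i = y i * y i := (abs_mul_abs_self (x i)).symm
        apply le_of_eq
        calc x i * (B i i * x i) = B i i * (x i * x i) := by ring
          _ = B i i * (y i * y i) := by rw [hxy]
          _ = y i * (B i i * y i) := by ring
      · have h1 : x i * x j ≤ y i * y j := by
          calc x i * x j ≤ |x i * x j| := le_abs_self _
          _ = y i * y j := by rw [hy]; simp [abs_mul]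
        have h2 : 0 ≤ B i j := hBnn i j hij
        nlinarith
    have expand : ∀ z : Fin n → ℝ, z ⬝ᵥ M *ᵥ z = μ * (z ⬝ᵥ z) - z ⬝ᵥ B *ᵥ z := by
      intro z
      rw [hM, Matrix.sub_mulVec, Matrix.smul_mulVec, Matrix.one_mulVec,
        dotProduct_sub, dotProduct_smul, smul_eq_mul]
    rw [expand] at hxq ⊢
    rw [hyy]
    linarith
  have hquad' : y ⬝ᵥ M *ᵥ y = 0 := by
    have h0 : 0 ≤ y ⬝ᵥ M *ᵥ y := by
      have := hMpsd.dotProduct_mulVec_nonneg y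
      simpa using this
    linarith
  have hMy : M *ᵥ y = 0 := by
    have := (hMpsd.dotProduct_mulVec_zero_iff y).mp (by simpa using hquad')
    exact this
  have hBy : B *ᵥ y = μ • y := by
    rw [hM, Matrix.sub_mulVec, Matrix.smul_mulVec, Matrix.one_mulVec] at hMy
    funext j
    have := congrFun hMy j
    simp only [Pi.sub_apply, Pi.smul_apply, Pi.zero_apply, smul_eq_mul] at this ⊢
    linarith
  -- zero entries propagate along edges
  have step : ∀ u w, G.Adj u w → y u = 0 → y w = 0 := by
    intro u w hadj hu
    have hrow : ∑ j, B u j * y j = 0 := by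
      have := congrFun hBy u
      simp only [Matrix.mulVec, dotProduct, Pi.smul_apply, smul_eq_mul] at this
      rw [this, hu, mul_zero]
    have hterm : ∀ j ∈ Finset.univ, 0 ≤ B u j * y j := by
      intro j _
      rcases eq_or_ne u j with rfl | huj
      · rw [hu, mul_zero]
      · exact mul_nonneg (hBnn u j huj) (abs_nonneg _)
    have := (Finset.sum_eq_zero_iff_of_nonneg hterm).mp hrow w (Finset.mem_univ w)
    have hpos := hBpos u w hadj
    have : y w = 0 := by
      by_contra hne
      have : 0 < B u w * y w := mul_pos hpos (lt_of_le_of_ne (abs_nonneg _) (Ne.symm hne))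
      linarith [(Finset.sum_eq_zero_iff_of_nonneg hterm).mp hrow w (Finset.mem_univ w)]
    exact this
  -- along walks
  have walkprop : ∀ u v : Fin n, G.Walk u v → y u = 0 → y v = 0 := by
    intro u v p
    induction p with
    | nil => exact id
    | cons h q ih => exact fun h0 => ih (step _ _ h h0)
  intro i
  intro hxi
  have hyi : y i = 0 := by rw [hy]; simp [hxi]
  have hall : ∀ j, y j = 0 := by
    intro j
    obtain ⟨p⟩ := hconn.preconnected i j
    exact walkprop i j p hyi
  apply hx
  funext j
  have := hall j
  rw [hy] at this
  exact abs_eq_zero.mp this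

/-- For a connected bipartite graph `G` on `n ≥ 2` vertices, the largest eigenvalue of any
generalized Laplacian matrix of `G` is simple: its eigenspace is one-dimensional. -/
theorem stmt6 (n : ℕ) (hn : 2 ≤ n) (G : SimpleGraph (Fin n))
    (hconn : G.Connected) (hbip : G.Colorable 2)
    (A : Matrix (Fin n) (Fin n) ℝ) (hA : IsGenLap G A)
    (μ : ℝ) (hμ : μ ∈ A.charpoly.roots) (hmax : ∀ ν ∈ A.charpoly.roots, ν ≤ μ) :
    Module.finrank ℝ (Module.End.eigenspace (Matrix.toLin' A) μ) = 1 := by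
  classical
  obtain ⟨hAsymm, hAneg, hAz, hArow⟩ := hA
  obtain ⟨C⟩ := hbip
  -- sign vector from the 2-coloring
  set σ : Fin n → ℝ := fun i => if C i = 0 then 1 else -1 with hσ
  have hσsq : ∀ i, σ i * σ i = 1 := by
    intro i; rw [hσ]; by_cases h : C i = 0 <;> simp [h]
  have hσabs : ∀ i, |σ i| = 1 := by
    intro i; rw [hσ]; by_cases h : C i = 0 <;> simp [h]
  have hσne : ∀ i, σ i ≠ 0 := by
    intro i; rw [hσ]; by_cases h : C i = 0 <;> simp [h]
  have hσadj : ∀ i j, G.Adj i j → σ i * σ j = -1 := by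
    intro i j hadj
    have hne : C i ≠ C j := C.valid hadj
    have key : ∀ a b : Fin 2, a ≠ b → (a = 0 ∧ b ≠ 0) ∨ (a ≠ 0 ∧ b = 0) := by decide
    rw [hσ]
    rcases key _ _ hne with ⟨h1, h2⟩ | ⟨h1, h2⟩ <;> simp [h1, h2]
  set D : Matrix (Fin n) (Fin n) ℝ := Matrix.diagonal σ with hD
  have hDD : D * D = 1 := by
    rw [hD, Matrix.diagonal_mul_diagonal]
    ext i j
    by_cases h : i = j
    · subst h; simp [Matrix.diagonal_apply_eq, Matrix.one_apply_eq, hσsq]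
    · simp [Matrix.diagonal_apply_ne _ h, Matrix.one_apply_ne h]
  set B : Matrix (Fin n) (Fin n) ℝ := D * A * D with hB
  have hBapp : ∀ i j, B i j = σ i * A i j * σ j := by
    intro i j
    rw [hB, hD]
    rw [Matrix.mul_apply]
    simp [Matrix.diagonal_mul, Matrix.mul_diagonal, Matrix.diagonal_apply]
  -- determinant identity: charpoly of A detects eigenvalues of B
  have hdet : ∀ ν : ℝ, (ν • (1 : Matrix (Fin n) (Fin n) ℝ) - B).det
      = (ν • (1 : Matrix (Fin n) (Fin n) ℝ) - A).det := by
    intro ν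
    have h1 : ν • (1 : Matrix (Fin n) (Fin n) ℝ) - B
        = D * (ν • (1 : Matrix (Fin n) (Fin n) ℝ) - A) * D := by
      rw [Matrix.mul_sub, Matrix.sub_mul, hB]
      congr 1
      rw [Matrix.mul_smul, Matrix.mul_one, Matrix.smul_mul, hDD]
    rw [h1, Matrix.det_mul, Matrix.det_mul]
    have : D.det * D.det = 1 := by
      rw [← Matrix.det_mul, hDD, Matrix.det_one]
    linear_combination (ν • (1 : Matrix (Fin n) (Fin n) ℝ) - A).det * this
  -- eigenvector transfer between A and B
  have transfer : ∀ (ν : ℝ) (v : Fin n → ℝ), A *ᵥ v = ν • v →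
      B *ᵥ (σ * v) = ν • (σ * v) := by
    intro ν v hv
    funext i
    have hAv := congrFun hv i
    simp only [Matrix.mulVec, dotProduct, Pi.smul_apply, smul_eq_mul, Pi.mul_apply] at hAv ⊢
    calc ∑ j, B i j * (σ j * v j) = ∑ j, σ i * (A i j * v j) := by
            apply Finset.sum_congr rfl
            intro j _
            rw [hBapp]
            linear_combination (σ i * A i j * v j) * hσsq j
      _ = σ i * ∑ j, A i j * v j := by rw [Finset.mul_sum]
      _ = ν * (σ i * v i) := by rw [hAv]; ring
  have transfer' : ∀ (ν : ℝ) (v : Fin n → ℝ), B *ᵥ v = ν • v →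
      A *ᵥ (σ * v) = ν • (σ * v) := by
    intro ν v hv
    funext i
    have hBv := congrFun hv i
    simp only [Matrix.mulVec, dotProduct, Pi.smul_apply, smul_eq_mul, Pi.mul_apply] at hBv ⊢
    calc ∑ j, A i j * (σ j * v j) = ∑ j, σ i * (B i j * v j) := by
            apply Finset.sum_congr rfl
            intro j _
            rw [hBapp]
            linear_combination (-(A i j * σ j * v j)) * hσsq i
      _ = σ i * ∑ j, B i j * v j := by rw [Finset.mul_sum]
      _ = ν * (σ i * v i) := by rw [hBv]; ring
  have hmulne : ∀ v : Fin n → ℝ, v ≠ 0 → (σ * v) ≠ 0 := by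
    intro v hv h0
    apply hv
    funext i
    have := congrFun h0 i
    simp only [Pi.mul_apply, Pi.zero_apply] at this
    rcases mul_eq_zero.mp this with h | h
    · exact absurd h (hσne i)
    · exact h
  -- B satisfies the hypotheses of entries_ne_zero
  have hBH : B.IsHermitian := by
    rw [Matrix.IsHermitian]
    ext i j
    simp only [Matrix.conjTranspose_apply, star_trivial]
    rw [hBapp, hBapp]
    have : A j i = A i j := by
      have := hAsymm
      rw [Matrix.IsSymm] at this
      calc A j i = Aᵀ i j := rfl
        _ = A i j := by rw [this]
    rw [this]; ring
  have hBpos : ∀ i j, G.Adj i j → 0 < B i j := by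
    intro i j hadj
    rw [hBapp]
    have h1 := hσadj i j hadj
    have h2 := hAneg i j hadj
    nlinarith
  have hBz : ∀ i j, i ≠ j → ¬ G.Adj i j → B i j = 0 := by
    intro i j hij hadj
    rw [hBapp, hAz i j hij hadj]; ring
  have hub : ∀ (ν : ℝ) (v : Fin n → ℝ), v ≠ 0 → B *ᵥ v = ν • v → ν ≤ μ := by
    intro ν v hv hve
    apply hmax
    rw [Polynomial.mem_roots']
    refine ⟨A.charpoly_monic.ne_zero, ?_⟩
    rw [Polynomial.IsRoot, charpoly_eval_eq']
    rw [← hdet]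
    rw [← Matrix.exists_mulVec_eq_zero_iff]
    refine ⟨v, hv, ?_⟩
    rw [Matrix.sub_mulVec, Matrix.smul_mulVec, Matrix.one_mulVec, hve, sub_self]
  -- key property: every nonzero eigenvector of A for μ has all entries nonzero
  have hkey : ∀ x : Fin n → ℝ, x ≠ 0 → A *ᵥ x = μ • x → ∀ i, x i ≠ 0 := by
    intro x hx hxe i
    have h1 := transfer μ x hxe
    have h2 := entries_ne_zero G hconn B hBH hBpos hBz μ hub (σ * x) (hmulne x hx) h1 i
    intro h0
    apply h2
    simp [h0]
  -- existence of an eigenvector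
  have hdetμ : (μ • (1 : Matrix (Fin n) (Fin n) ℝ) - A).det = 0 := by
    rw [← charpoly_eval_eq']
    exact (Polynomial.mem_roots'.mp hμ).2
  obtain ⟨x₀, hx₀ne, hx₀⟩ := (Matrix.exists_mulVec_eq_zero_iff).mpr hdetμ
  have hx₀e : A *ᵥ x₀ = μ • x₀ := by
    rw [Matrix.sub_mulVec, Matrix.smul_mulVec, Matrix.one_mulVec, sub_eq_zero] at hx₀
    exact hx₀.symm
  have hpos : 0 < n := by omega
  set i₀ : Fin n := ⟨0, hpos⟩ with hi₀
  have hx₀i₀ : x₀ i₀ ≠ 0 := hkey x₀ hx₀ne hx₀e i₀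
  -- the eigenspace equals the span of x₀
  have hmem : ∀ z : Fin n → ℝ, z ∈ Module.End.eigenspace (Matrix.toLin' A) μ ↔
      A *ᵥ z = μ • z := by
    intro z
    rw [Module.End.mem_eigenspace_iff, Matrix.toLin'_apply]
  have hspan : Module.End.eigenspace (Matrix.toLin' A) μ = Submodule.span ℝ {x₀} := by
    apply le_antisymm
    · intro z hz
      rw [hmem] at hz
      set w : Fin n → ℝ := x₀ i₀ • z - z i₀ • x₀ with hw
      have hwe : A *ᵥ w = μ • w := by
        rw [hw, Matrix.mulVec_sub, Matrix.mulVec_smul, Matrix.mulVec_smul, hz, hx₀e,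
          smul_sub, smul_comm (x₀ i₀) μ, smul_comm (z i₀) μ]
      have hwi₀ : w i₀ = 0 := by
        rw [hw]; simp only [Pi.sub_apply, Pi.smul_apply, smul_eq_mul]; ring
      have hw0 : w = 0 := by
        by_contra hne
        exact hkey w hne hwe i₀ hwi₀
      have : x₀ i₀ • z = z i₀ • x₀ := by
        have := sub_eq_zero.mp hw0
        exact this
      have hz' : z = (z i₀ / x₀ i₀) • x₀ := by
        funext j
        have := congrFun this j
        simp only [Pi.smul_apply, smul_eq_mul] at this ⊢
        field_simp
        linarith
      rw [hz']
      exact Submodule.smul_mem _ _ (Submodule.mem_span_singleton_self x₀)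
    · rw [Submodule.span_le, Set.singleton_subset_iff]
      rw [SetLike.mem_coe, hmem]
      exact hx₀e
  rw [hspan, finrank_span_singleton hx₀ne]
end

section
/- Let n ≥ 4 and suppose A ∈ S_L(K_{1,n−1}) has multiset of eigenvalues {0, λ^{(n−2)}, μ} with 0 < λ < μ (i.e., ordered multiplicity list (1, n−2, 1)). Then A = λL, where L is the combinatorial Laplacian matrix of K_{1,n−1}, and moreover μ = λn, so the spectrum of A is {0, λ^{(n−2)}, λn}. -/
/-!
On a leaf `j` of the star, a `λ`-eigenvector `x` of `A` satisfies `A j j * (x j - x 0) = λ * x j`.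
If no leaf has `A j j = λ`, an eigenvector is determined by `x 0`, so `λ` has multiplicity at most
`1`. If some leaf `i` has `A i i = λ` and another leaf `j` does not, an eigenvector vanishing off
`{0, i, j}` has `x 0 = 0` (row `i`), `x j = 0` (row `j`) and then `x i = 0` (the centre row), so
the multiplicity is at most `n - 3`. Multiplicity `n - 2` with `n ≥ 4` therefore forces
`A j j = λ` on every leaf, which pins down `A = λ L`; comparing traces then gives
`2 (n - 1) λ = (n - 2) λ + μ`.
-/

open Matrix

/-- The star `K_{1,n-1}` on vertex set `Fin n`, with center `0`. -/
def starGraph (n : ℕ) : SimpleGraph (Fin n) where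
  Adj i j := i ≠ j ∧ (i.val = 0 ∨ j.val = 0)
  symm := by
    constructor
    intro i j h
    exact ⟨Ne.symm h.1, h.2.symm⟩
  loopless := by
    constructor
    intro i h
    exact h.1 rfl

instance (n : ℕ) : DecidableRel (starGraph n).Adj := fun i j =>
  inferInstanceAs (Decidable (i ≠ j ∧ (i.val = 0 ∨ j.val = 0)))

open Module Module.End

theorem Submodule.finrank_le_card_of_forall_eq_zero {K M ι : Type*} [Field K] [AddCommGroup M]
    [Module K M] (V : Submodule K M) (f : ι → Module.Dual K M) (s : Finset ι)
    (h : ∀ x ∈ V, (∀ i ∈ s, f i x = 0) → x = 0) : finrank K V ≤ s.card := by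
  have hinj : Function.Injective ((LinearMap.pi fun i : s => f i) ∘ₗ V.subtype) := by
    rw [← LinearMap.ker_eq_bot, LinearMap.ker_eq_bot']
    intro x hx
    exact Subtype.ext <| h x x.2 fun i hi => congrFun hx ⟨i, hi⟩
  simpa using LinearMap.finrank_le_finrank_of_injective hinj

theorem Matrix.IsHermitian.count_roots_charpoly {𝕜 ι : Type*} [RCLike 𝕜] [Fintype ι]
    [DecidableEq ι] {A : Matrix ι ι 𝕜} (hA : A.IsHermitian) (μ : ℝ) :
    A.charpoly.roots.count (μ : 𝕜) = finrank 𝕜 (eigenspace (toEuclideanLin A) μ) := by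
  have hT := isSymmetric_toEuclideanLin_iff.mpr hA
  have hn : finrank 𝕜 (EuclideanSpace 𝕜 ι) = Fintype.card ι := finrank_euclideanSpace
  have hchar : (toEuclideanLin A).charpoly = A.charpoly := by
    rw [toEuclideanLin_eq_toLin_orthonormal, Matrix.charpoly_toLin]
  rw [← hT.card_filter_eigenvalues_eq hn, ← hchar, hT.roots_charpoly_eq_eigenvalues hn,
    Multiset.count_map]
  simp [Finset.card, Finset.filter_val, eq_comm]

theorem Matrix.mulVec_eq_smul_of_mem_eigenspace_toEuclideanLin {𝕜 ι : Type*} [RCLike 𝕜]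
    [Fintype ι] [DecidableEq ι] {A : Matrix ι ι 𝕜} {μ : 𝕜} {x : EuclideanSpace 𝕜 ι}
    (hx : x ∈ eigenspace (toEuclideanLin A) μ) : A *ᵥ x.ofLp = μ • x.ofLp :=
  congrArg WithLp.ofLp (mem_eigenspace_iff.mp hx)

theorem Matrix.eq_of_sum_eq_zero_of_forall_ne {ι R : Type*} [Fintype ι] [DecidableEq ι]
    [AddCommGroup R] {A B : Matrix ι ι R} (hA : ∀ i, ∑ j, A i j = 0) (hB : ∀ i, ∑ j, B i j = 0)
    (h : ∀ i j, i ≠ j → A i j = B i j) : A = B := by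
  ext i j
  rcases eq_or_ne i j with rfl | hij
  · have hsum := Finset.add_sum_erase Finset.univ (A i) (Finset.mem_univ i)
    rw [Finset.sum_congr rfl fun j hj => h i j (Finset.ne_of_mem_erase hj).symm,
      hA i, ← hB i, ← Finset.add_sum_erase Finset.univ (B i) (Finset.mem_univ i)] at hsum
    exact add_right_cancel hsum
  · exact h i j hij

theorem starGraph_adj_iff {n : ℕ} [NeZero n] {i j : Fin n} :
    (starGraph n).Adj i j ↔ i ≠ j ∧ (i = 0 ∨ j = 0) := by
  rw [Fin.ext_iff (b := 0), Fin.ext_iff (b := 0), Fin.val_zero]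
  rfl

namespace IsGenLap

variable {n : ℕ} {A : Matrix (Fin n) (Fin n) ℝ} [NeZero n]

theorem star_apply_eq_zero (hA : IsGenLap (starGraph n) A) {i j : Fin n} (hi : i ≠ 0)
    (hj : j ≠ 0) (hij : i ≠ j) : A i j = 0 :=
  hA.2.2.1 i j hij fun h => by simp_all [starGraph_adj_iff]

theorem star_apply_zero_ne_zero (hA : IsGenLap (starGraph n) A) {j : Fin n} (hj : j ≠ 0) :
    A 0 j ≠ 0 :=
  (hA.2.1 0 j (starGraph_adj_iff.2 ⟨hj.symm, Or.inl rfl⟩)).ne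

theorem star_apply_zero_add_diag (hA : IsGenLap (starGraph n) A) {j : Fin n} (hj : j ≠ 0) :
    A j 0 + A j j = 0 :=
  (Fintype.sum_eq_add 0 j hj.symm fun _ hk =>
    hA.star_apply_eq_zero hj hk.1 (Ne.symm hk.2)).symm.trans (hA.2.2.2 j)

theorem star_mulVec_apply (hA : IsGenLap (starGraph n) A) {j : Fin n} (hj : j ≠ 0)
    (x : Fin n → ℝ) : (A *ᵥ x) j = A j j * (x j - x 0) := by
  rw [mulVec, dotProduct, Fintype.sum_eq_add 0 j hj.symm fun k hk => by
    rw [hA.star_apply_eq_zero hj hk.1 (Ne.symm hk.2), zero_mul]]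
  linear_combination x 0 * hA.star_apply_zero_add_diag hj

theorem star_finrank_eigenspace_le_one (hA : IsGenLap (starGraph n) A) {c : ℝ}
    (hc : ∀ j ≠ 0, A j j ≠ c) : finrank ℝ (eigenspace (toEuclideanLin A) c) ≤ 1 := by
  have hvanish : ∀ x ∈ eigenspace (toEuclideanLin A) c,
      (∀ i ∈ ({0} : Finset (Fin n)), (EuclideanSpace.proj i).toLinearMap x = 0) → x = 0 := by
    intro x hx hx0
    replace hx0 : x 0 = 0 := hx0 0 (Finset.mem_singleton_self 0)
    have hrow := mulVec_eq_smul_of_mem_eigenspace_toEuclideanLin hx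
    ext j
    rcases eq_or_ne j 0 with rfl | hj
    · exact hx0
    have hj' := congrFun hrow j
    rw [hA.star_mulVec_apply hj] at hj'
    simp only [hx0, Pi.smul_apply, smul_eq_mul] at hj'
    have : (A j j - c) * x j = 0 := by linear_combination hj'
    simpa using (mul_eq_zero.mp this).resolve_left (sub_ne_zero.mpr (hc j hj))
  simpa using Submodule.finrank_le_card_of_forall_eq_zero _ _ _ hvanish

theorem star_finrank_eigenspace_le_sub_three (hA : IsGenLap (starGraph n) A) {c : ℝ}
    (hc : c ≠ 0) {i j : Fin n} (hi : i ≠ 0) (hj : j ≠ 0) (hii : A i i = c) (hjj : A j j ≠ c) :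
    finrank ℝ (eigenspace (toEuclideanLin A) c) ≤ n - 3 := by
  have hij : i ≠ j := by rintro rfl; exact hjj hii
  have hvanish : ∀ x ∈ eigenspace (toEuclideanLin A) c,
      (∀ k ∈ (Finset.univ \ {0, i, j}), (EuclideanSpace.proj k).toLinearMap x = 0) →
        x = 0 := by
    intro x hx hxs
    have hrow := mulVec_eq_smul_of_mem_eigenspace_toEuclideanLin hx
    have hx0 : x 0 = 0 := by
      have hi' := congrFun hrow i
      rw [hA.star_mulVec_apply hi, hii] at hi'
      simp only [Pi.smul_apply, smul_eq_mul] at hi'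
      exact (mul_eq_zero.mp (by linear_combination -hi' : c * x 0 = 0)).resolve_left hc
    have hxj : x j = 0 := by
      have hj' := congrFun hrow j
      rw [hA.star_mulVec_apply hj] at hj'
      simp only [hx0, Pi.smul_apply, smul_eq_mul] at hj'
      have : (A j j - c) * x j = 0 := by linear_combination hj'
      exact (mul_eq_zero.mp this).resolve_left (sub_ne_zero.mpr hjj)
    have hxk : ∀ k ≠ i, x k = 0 := by
      intro k hk
      by_cases hk0 : k = 0
      · exact hk0 ▸ hx0
      by_cases hkj : k = j
      · exact hkj ▸ hxj
      exact hxs k (by simp [hk0, hk, hkj])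
    have hxi : x i = 0 := by
      have h0 := congrFun hrow 0
      rw [mulVec, dotProduct, Fintype.sum_eq_single i fun k hk => by simp [hxk k hk]] at h0
      simp only [hx0, Pi.smul_apply, smul_eq_mul, mul_zero] at h0
      exact (mul_eq_zero.mp h0).resolve_left (hA.star_apply_zero_ne_zero hi)
    ext k
    by_cases hk : k = i
    · exact hk ▸ hxi
    · exact hxk k hk
  have hcard : (Finset.univ \ {0, i, j} : Finset (Fin n)).card = n - 3 := by
    rw [Finset.card_sdiff, Finset.card_univ, Fintype.card_fin, Finset.inter_univ,
      Finset.card_insert_of_notMem (by simp [hi.symm, hj.symm]),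
      Finset.card_pair hij]
  exact hcard ▸ Submodule.finrank_le_card_of_forall_eq_zero _ _ _ hvanish

theorem star_diag_eq_of_le_finrank_eigenspace (hA : IsGenLap (starGraph n) A) (hn : 4 ≤ n)
    {c : ℝ} (hc : c ≠ 0) (hdim : n - 2 ≤ finrank ℝ (eigenspace (toEuclideanLin A) c)) :
    ∀ j ≠ 0, A j j = c := by
  by_contra! ⟨j, hj, hjj⟩
  by_cases hex : ∃ i ≠ 0, A i i = c
  · obtain ⟨i, hi, hii⟩ := hex
    have := hA.star_finrank_eigenspace_le_sub_three hc hi hj hii hjj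
    omega
  · have := hA.star_finrank_eigenspace_le_one fun i hi hii => hex ⟨i, hi, hii⟩
    omega

theorem star_eq_smul_lapMatrix (hA : IsGenLap (starGraph n) A) {c : ℝ}
    (hdiag : ∀ j ≠ 0, A j j = c) : A = c • (starGraph n).lapMatrix ℝ := by
  refine eq_of_sum_eq_zero_of_forall_ne hA.2.2.2 (fun i => ?_) fun i j hij => ?_
  · have hrowL : ∑ j, (starGraph n).lapMatrix ℝ i j = 0 := by
      simpa [mulVec, dotProduct] using
        congrFun ((starGraph n).lapMatrix_mulVec_const_eq_zero (R := ℝ)) i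
    simp only [Matrix.smul_apply, smul_eq_mul, ← Finset.mul_sum, hrowL, mul_zero]
  have hL : (starGraph n).lapMatrix ℝ i j = if (starGraph n).Adj i j then -1 else 0 := by
    by_cases h : (starGraph n).Adj i j <;>
      simp [SimpleGraph.lapMatrix, SimpleGraph.degMatrix, hij, h]
  rw [Matrix.smul_apply, hL, smul_eq_mul]
  split_ifs with hadj
  · obtain ⟨-, rfl | rfl⟩ := starGraph_adj_iff.mp hadj
    · linarith [hA.1.apply 0 j, hA.star_apply_zero_add_diag hij.symm, hdiag j hij.symm]
    · linarith [hA.star_apply_zero_add_diag hij, hdiag i hij]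
  · rw [hA.2.2.1 i j hij hadj, mul_zero]

theorem star_trace_eq (hA : IsGenLap (starGraph n) A) {c : ℝ} (hdiag : ∀ j ≠ 0, A j j = c) :
    A.trace = 2 * ((n : ℝ) - 1) * c := by
  have hcard : ((Finset.univ.erase (0 : Fin n)).card : ℝ) = n - 1 := by
    rw [Finset.card_erase_of_mem (Finset.mem_univ 0), Finset.card_univ, Fintype.card_fin,
      Nat.cast_pred (Nat.pos_of_neZero n)]
  have hleaf : ∑ j ∈ Finset.univ.erase 0, A j j = (n - 1) * c := by
    rw [Finset.sum_congr rfl fun j hj => hdiag j (Finset.ne_of_mem_erase hj), Finset.sum_const,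
      nsmul_eq_mul, hcard]
  have hcenter : ∑ j ∈ Finset.univ.erase 0, A 0 j = -((n - 1) * c) := by
    rw [← hleaf, ← Finset.sum_neg_distrib]
    refine Finset.sum_congr rfl fun j hj => ?_
    linarith [hA.1.apply 0 j, hA.star_apply_zero_add_diag (Finset.ne_of_mem_erase hj)]
  have hrow := Finset.add_sum_erase Finset.univ (A 0) (Finset.mem_univ 0)
  rw [hA.2.2.2 0, hcenter] at hrow
  rw [trace, ← Finset.add_sum_erase Finset.univ _ (Finset.mem_univ 0)]
  simp only [diag_apply, hleaf]
  linear_combination hrow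

end IsGenLap

/-- For `n ≥ 4`, the only generalized Laplacian matrix of the star `K_{1,n-1}` with
spectrum `{0, λ^(n-2), μ}` where `0 < λ < μ` is `λ·L`, with `L` the combinatorial
Laplacian matrix of the star; in that case `μ = λn`. -/
theorem stmt13 (n : ℕ) (hn : 4 ≤ n) (lam mu : ℝ) (hlam : 0 < lam) (hlm : lam < mu)
    (A : Matrix (Fin n) (Fin n) ℝ) (hA : IsGenLap (starGraph n) A)
    (hspec : A.charpoly.roots = 0 ::ₘ mu ::ₘ Multiset.replicate (n - 2) lam) :
    A = lam • ((starGraph n).lapMatrix ℝ) ∧ mu = lam * n := by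
  have : NeZero n := ⟨by omega⟩
  have hH : A.IsHermitian := isHermitian_iff_isSymm.mpr hA.1
  have hdim : n - 2 ≤ finrank ℝ (eigenspace (toEuclideanLin A) lam) := by
    have hcount := hH.count_roots_charpoly lam
    rw [RCLike.ofReal_real_eq_id, id, hspec, Multiset.count_cons_of_ne hlam.ne',
      Multiset.count_cons_of_ne hlm.ne, Multiset.count_replicate_self] at hcount
    exact hcount.le
  have hdiag := hA.star_diag_eq_of_le_finrank_eigenspace hn hlam.ne' hdim
  refine ⟨hA.star_eq_smul_lapMatrix hdiag, ?_⟩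
  have htrace := Matrix.trace_eq_sum_roots_charpoly_of_splits hH.splits_charpoly
  rw [hA.star_trace_eq hdiag, hspec] at htrace
  have hcast : ((n - 2 : ℕ) : ℝ) = n - 2 := by rw [Nat.cast_sub (by omega), Nat.cast_ofNat]
  simp only [Multiset.sum_cons, Multiset.sum_replicate, nsmul_eq_mul, hcast] at htrace
  linear_combination -htrace
end

section
/- Let G be a simple graph on n ≥ 3 vertices and let λ, μ be positive real numbers with μ ≠ λ, and set g = (μ − λ)/λ. Then there exists a matrix A ∈ S_L(G) with multiset of eigenvalues {0, λ^{(n−2)}, μ} if and only if there exists a vector u ∈ ℝⁿ with entries u_i such that: ‖u‖² = 1; 𝟙ᵀu = 0; g·u_i·u_j = 1/n whenever i ≠ j and {i,j} is not an edge of G; and g·u_i·u_j < 1/n whenever {i,j} is an edge of G. -/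
open Matrix

section Helpers
open Polynomial

lemma charpoly_conj_aux {n : ℕ} (P M Q : Matrix (Fin n) (Fin n) ℝ)
    (hPQ : P * Q = 1) : (P * M * Q).charpoly = M.charpoly := by
  have hQP : Q * P = 1 := mul_eq_one_comm.mp hPQ
  have key : charmatrix (P * M * Q) =
      P.map (C : ℝ →+* ℝ[X]) * charmatrix M * Q.map (C : ℝ →+* ℝ[X]) := by
    unfold charmatrix
    simp only [RingHom.mapMatrix_apply]
    rw [mul_sub, sub_mul]
    congr 1
    · rw [mul_assoc, (Matrix.scalar_commute (X : ℝ[X]) (fun r => Commute.all _ _) _).eq,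
        ← mul_assoc, ← Matrix.map_mul, hPQ]
      simp
    · rw [← Matrix.map_mul, ← Matrix.map_mul]
  have hdet : (P.map (C : ℝ →+* ℝ[X])).det * (Q.map (C : ℝ →+* ℝ[X])).det = 1 := by
    rw [← det_mul, ← Matrix.map_mul, hPQ]
    simp
  unfold Matrix.charpoly
  rw [key, det_mul, det_mul, mul_right_comm, hdet, one_mul]

lemma roots_charpoly_diag {n : ℕ} (d : Fin n → ℝ) :
    (diagonal d).charpoly.roots = Multiset.map d Finset.univ.val := by
  rw [Matrix.charpoly_of_upperTriangular _ (Matrix.blockTriangular_diagonal d)]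
  have : ∀ i : Fin n, (X - C ((diagonal d) i i)) = X - C (d i) := by
    intro i; rw [diagonal_apply_eq]
  simp_rw [diagonal_apply_eq]
  have := Polynomial.roots_multiset_prod_X_sub_C (Finset.univ.val.map d)
  rw [Multiset.map_map] at this
  rw [Finset.prod_eq_multiset_prod]
  exact this

lemma roots_charpoly_conj_diag {n : ℕ} (P Q : Matrix (Fin n) (Fin n) ℝ) (hPQ : P * Q = 1)
    (d : Fin n → ℝ) :
    (P * diagonal d * Q).charpoly.roots = Multiset.map d Finset.univ.val := by
  rw [charpoly_conj_aux _ _ _ hPQ, roots_charpoly_diag]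


lemma eig_structure {n : ℕ} (lam mu : ℝ) (hlam : lam ≠ 0) (hmu : mu ≠ 0) (hne : mu ≠ lam)
    (e : Fin n → ℝ)
    (h : Multiset.map e Finset.univ.val = 0 ::ₘ mu ::ₘ Multiset.replicate (n-2) lam) :
    ∃ i0 i1 : Fin n, i0 ≠ i1 ∧ e i0 = 0 ∧ e i1 = mu ∧
      ∀ k, k ≠ i0 → k ≠ i1 → e k = lam := by
  have two_le : ∀ (x : ℝ) (k m : Fin n), k ≠ m → e k = x → e m = x →
      2 ≤ Multiset.count x (Multiset.map e Finset.univ.val) := by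
    intro x k m hkm hk hm
    rw [Multiset.count_map, ← Finset.filter_val]
    exact Finset.one_lt_card.mpr ⟨k, by simp [hk], m, by simp [hm], hkm⟩
  have h0mem : (0:ℝ) ∈ Multiset.map e Finset.univ.val := by rw [h]; simp
  obtain ⟨i0, -, hi0⟩ := Multiset.mem_map.mp h0mem
  have hmumem : mu ∈ Multiset.map e Finset.univ.val := by rw [h]; simp
  obtain ⟨i1, -, hi1⟩ := Multiset.mem_map.mp hmumem
  have hne01 : i0 ≠ i1 := by
    intro hEq; apply hmu; rw [← hi1, ← hEq, hi0]
  have hc0 : Multiset.count (0:ℝ) (Multiset.map e Finset.univ.val) = 1 := by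
    rw [h]
    simp [Multiset.count_cons, Multiset.count_replicate, Ne.symm hmu, Ne.symm hlam]
    exact fun hl => absurd hl hlam
  have hcmu : Multiset.count mu (Multiset.map e Finset.univ.val) = 1 := by
    rw [h]
    simp [Multiset.count_cons, Multiset.count_replicate, hmu, hne]
    exact fun hl => absurd hl.symm hne
  refine ⟨i0, i1, hne01, hi0, hi1, fun k hk0 hk1 => ?_⟩
  have hkmem : e k ∈ Multiset.map e Finset.univ.val :=
    Multiset.mem_map.mpr ⟨k, Finset.mem_univ k, rfl⟩
  rw [h] at hkmem
  rcases Multiset.mem_cons.mp hkmem with h1 | hkmem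
  · exact absurd (le_trans (two_le 0 k i0 hk0 h1 hi0) hc0.le) (by norm_num)
  rcases Multiset.mem_cons.mp hkmem with h2 | hkmem
  · exact absurd (le_trans (two_le mu k i1 hk1 h2 hi1) hcmu.le) (by norm_num)
  · exact (Multiset.mem_replicate.mp hkmem).2

lemma map_d_univ {n : ℕ} (hn : 3 ≤ n) (lam mu : ℝ) (i0 i1 : Fin n) (hne01 : i0 ≠ i1)
    (d : Fin n → ℝ)
    (h0 : d i0 = 0) (h1 : d i1 = mu) (hrest : ∀ k, k ≠ i0 → k ≠ i1 → d k = lam) :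
    Multiset.map d Finset.univ.val = 0 ::ₘ mu ::ₘ Multiset.replicate (n-2) lam := by
  have hmem0 : i0 ∈ Finset.univ.val := Finset.mem_univ_val i0
  have hmem1 : i1 ∈ Finset.univ.val.erase i0 :=
    (Multiset.mem_erase_of_ne hne01.symm).mpr (Finset.mem_univ_val i1)
  have hsplit : Finset.univ.val = i0 ::ₘ i1 ::ₘ ((Finset.univ.val.erase i0).erase i1) := by
    rw [Multiset.cons_erase hmem1, Multiset.cons_erase hmem0]
  have hnodup : (Finset.univ.val.erase i0).Nodup := Finset.univ.nodup.erase _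
  have hcard : ((Finset.univ.val.erase i0).erase i1).card = n - 2 := by
    rw [Multiset.card_erase_of_mem hmem1, Multiset.card_erase_of_mem hmem0]
    simp [Finset.card_univ]
    omega
  have hrep : Multiset.map d ((Finset.univ.val.erase i0).erase i1)
      = Multiset.replicate (n-2) lam := by
    apply Multiset.eq_replicate.mpr
    constructor
    · rw [Multiset.card_map, hcard]
    · intro b hb
      obtain ⟨k, hk, rfl⟩ := Multiset.mem_map.mp hb
      have hk1 : k ≠ i1 ∧ k ∈ Finset.univ.val.erase i0 :=
        (hnodup.mem_erase_iff).mp hk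
      have hk0 : k ≠ i0 := ((Finset.univ.nodup.mem_erase_iff).mp hk1.2).1
      exact hrest k hk0 hk1.1
  rw [hsplit, Multiset.map_cons, Multiset.map_cons, h0, h1, hrep]

lemma forward_dir {n : ℕ} (hn : 3 ≤ n) (lam mu : ℝ)
    (hlam : 0 < lam) (hmu : 0 < mu) (hne : mu ≠ lam)
    (A : Matrix (Fin n) (Fin n) ℝ) (hsymm : A.IsSymm)
    (hrow : ∀ i, ∑ j, A i j = 0)
    (hroots : A.charpoly.roots = 0 ::ₘ mu ::ₘ Multiset.replicate (n - 2) lam) :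
    ∃ u : Fin n → ℝ, (∑ i, (u i) ^ 2 = 1) ∧ (∑ i, u i = 0) ∧
      ∀ i j, A i j = lam * (if i = j then 1 else 0) - lam/n + (mu - lam) * (u i * u j) := by
  have hnpos : (0:ℝ) < n := by
    have : (3:ℝ) ≤ n := by exact_mod_cast hn
    linarith
  have hn0 : (n:ℝ) ≠ 0 := hnpos.ne'
  have hherm : A.IsHermitian := by
    rw [Matrix.IsHermitian, conjTranspose_eq_transpose_of_trivial]; exact hsymm
  set V : Matrix (Fin n) (Fin n) ℝ := (hherm.eigenvectorUnitary : Matrix (Fin n) (Fin n) ℝ)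
    with hVdef
  set e : Fin n → ℝ := hherm.eigenvalues with hedef
  have hspec : A = V * diagonal e * star V := by
    have := hherm.spectral_theorem
    simpa [RCLike.ofReal_real_eq_id, Function.comp] using this
  have hVsV : V * star V = 1 := mem_unitaryGroup_iff.mp (hherm.eigenvectorUnitary).2
  have hsVV : star V * V = 1 := mem_unitaryGroup_iff'.mp (hherm.eigenvectorUnitary).2
  have hroots2 : Multiset.map e Finset.univ.val
      = 0 ::ₘ mu ::ₘ Multiset.replicate (n - 2) lam := by
    rw [← roots_charpoly_conj_diag V (star V) hVsV e, ← hspec, hroots]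
  obtain ⟨i0, i1, hne01, hei0, hei1, hrest⟩ :=
    eig_structure lam mu hlam.ne' hmu.ne' hne e hroots2
  have hstar : ∀ i j, (star V) i j = V j i := fun i j => by simp [Matrix.star_apply]
  have hentry0 : ∀ i j, A i j = ∑ k, V i k * e k * V j k := by
    intro i j
    rw [hspec, Matrix.mul_apply]
    refine Finset.sum_congr rfl fun k _ => ?_
    rw [Matrix.mul_diagonal, hstar]
  have hcol : ∀ k l, ∑ i, V i k * V i l = if k = l then 1 else 0 := by
    intro k l
    have h1 : (star V * V) k l = (1 : Matrix (Fin n) (Fin n) ℝ) k l := by rw [hsVV]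
    simpa [Matrix.mul_apply, hstar, Matrix.one_apply] using h1
  have hrowo : ∀ i j, ∑ k, V i k * V j k = if i = j then 1 else 0 := by
    intro i j
    have h1 : (V * star V) i j = (1 : Matrix (Fin n) (Fin n) ℝ) i j := by rw [hVsV]
    simpa [Matrix.mul_apply, hstar, Matrix.one_apply] using h1
  set t : Fin n → ℝ := fun k => ∑ i, V i k with htdef
  have hA1 : (A *ᵥ fun _ => (1:ℝ)) = 0 := by
    funext i
    simp only [Matrix.mulVec, dotProduct, mul_one]
    exact hrow i
  have het : ∀ k, e k * t k = 0 := by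
    have h1 : diagonal e * star V = star V * A := by
      rw [hspec, ← mul_assoc, ← mul_assoc, hsVV, one_mul]
    intro k
    have h2 : ((diagonal e * star V) *ᵥ fun _ => (1:ℝ)) k
        = ((star V * A) *ᵥ fun _ => (1:ℝ)) k := by rw [h1]
    have hL : ((diagonal e * star V) *ᵥ fun _ => (1:ℝ)) k = e k * t k := by
      rw [← Matrix.mulVec_mulVec]
      simp only [Matrix.mulVec, dotProduct, mul_one, Matrix.diagonal_apply]
      rw [Finset.sum_eq_single k (fun b _ hb => by simp [Ne.symm hb]) (by simp)]
      simp only [hstar, if_true]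
      rfl
    have hR : ((star V * A) *ᵥ fun _ => (1:ℝ)) k = 0 := by
      rw [← Matrix.mulVec_mulVec, hA1, Matrix.mulVec_zero]
      rfl
    rw [hL, hR] at h2
    exact h2
  have ht0 : ∀ k, k ≠ i0 → t k = 0 := by
    intro k hk
    have hek : e k ≠ 0 := by
      by_cases hk1 : k = i1
      · rw [hk1, hei1]; exact hmu.ne'
      · rw [hrest k hk hk1]; exact hlam.ne'
    exact (mul_eq_zero.mp (het k)).resolve_left hek
  have hone : ∀ i, (1:ℝ) = t i0 * V i i0 := by
    intro i
    have h1 : (V *ᵥ (star V *ᵥ fun _ => (1:ℝ))) i = 1 := by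
      rw [Matrix.mulVec_mulVec, hVsV, Matrix.one_mulVec]
    have h2 : (star V *ᵥ fun _ => (1:ℝ)) = t := by
      funext k
      simp [Matrix.mulVec, dotProduct, hstar, htdef]
    rw [h2] at h1
    have h3 : (V *ᵥ t) i = V i i0 * t i0 := by
      show ∑ k, V i k * t k = V i i0 * t i0
      exact Finset.sum_eq_single i0 (fun k _ hk => by rw [ht0 k hk, mul_zero]) (by simp)
    rw [h3] at h1
    rw [← h1]; ring
  have hc2 : t i0 * t i0 = n := by
    have h1 : ∑ i, V i i0 * V i i0 = 1 := by simpa using hcol i0 i0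
    calc t i0 * t i0 = (t i0 * t i0) * ∑ i, V i i0 * V i i0 := by rw [h1, mul_one]
      _ = ∑ i, (t i0 * V i i0) * (t i0 * V i i0) := by
          rw [Finset.mul_sum]; exact Finset.sum_congr rfl fun i _ => by ring
      _ = ∑ _i : Fin n, (1:ℝ) := Finset.sum_congr rfl fun i _ => by rw [← hone i]; norm_num
      _ = n := by simp
  have hww : ∀ i j, V i i0 * V j i0 = 1 / n := by
    intro i j
    have h3 : (t i0 * t i0) * (V i i0 * V j i0) = 1 := by
      calc (t i0 * t i0) * (V i i0 * V j i0) = (t i0 * V i i0) * (t i0 * V j i0) := by ring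
        _ = 1 := by rw [← hone i, ← hone j, mul_one]
    rw [hc2] at h3
    rw [eq_div_iff hn0]
    linarith
  refine ⟨fun i => V i i1, by simpa [pow_two] using hcol i1 i1,
    by simpa using ht0 i1 (Ne.symm hne01), ?_⟩
  intro i j
  have hsplit : ∑ k, (e k - lam) * (V i k * V j k)
      = (e i0 - lam) * (V i i0 * V j i0) + (e i1 - lam) * (V i i1 * V j i1) := by
    rw [← Finset.sum_subset (Finset.subset_univ ({i0, i1} : Finset (Fin n)))
        (fun x _ hx => ?_)]
    · rw [Finset.sum_pair hne01]
    · have hx0 : x ≠ i0 := fun h => hx (by simp [h])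
      have hx1 : x ≠ i1 := fun h => hx (by simp [h])
      rw [hrest x hx0 hx1, sub_self, zero_mul]
  calc A i j = lam * (∑ k, V i k * V j k) + ∑ k, (e k - lam) * (V i k * V j k) := by
        rw [hentry0 i j, Finset.mul_sum, ← Finset.sum_add_distrib]
        exact Finset.sum_congr rfl fun k _ => by ring
    _ = lam * (if i = j then 1 else 0)
        + ((0 - lam) * (1/n) + (mu - lam) * (V i i1 * V j i1)) := by
        rw [hrowo i j, hsplit, hei0, hei1, hww i j]
    _ = lam * (if i = j then 1 else 0) - lam/n + (mu - lam) * (V i i1 * V j i1) := by ring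

lemma backward_dir {n : ℕ} (hn : 3 ≤ n) (lam mu : ℝ) (hlam : 0 < lam) (hmu : 0 < mu)
    (u : Fin n → ℝ) (hu2 : ∑ i, u i ^ 2 = 1) (husum : ∑ i, u i = 0) :
    (Matrix.of fun i j : Fin n =>
        lam * (if i = j then 1 else 0) - lam/(n:ℝ) + (mu - lam) * (u i * u j)).charpoly.roots
      = 0 ::ₘ mu ::ₘ Multiset.replicate (n - 2) lam := by
  haveI : NeZero n := ⟨by omega⟩
  have hnpos : (0:ℝ) < n := by
    have : (3:ℝ) ≤ n := by exact_mod_cast hn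
    linarith
  have hn0 : (n:ℝ) ≠ 0 := hnpos.ne'
  have h01 : (0 : Fin n) ≠ 1 := by
    have h1 : ((1 : Fin n) : ℕ) = 1 % n := Fin.val_one' n
    intro h
    rw [Fin.ext_iff] at h
    rw [h1] at h
    simp at h
    omega
  set A : Matrix (Fin n) (Fin n) ℝ := Matrix.of fun i j : Fin n =>
    lam * (if i = j then 1 else 0) - lam/(n:ℝ) + (mu - lam) * (u i * u j) with hAdef
  set c : ℝ := (Real.sqrt n)⁻¹ with hcdef
  have hcc : c * c = (n:ℝ)⁻¹ := by
    rw [hcdef, ← mul_inv, Real.mul_self_sqrt hnpos.le]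
  have hc0 : c ≠ 0 := by
    rw [hcdef]
    exact inv_ne_zero (Real.sqrt_ne_zero'.mpr hnpos)
  set v : Fin n → EuclideanSpace ℝ (Fin n) := fun k =>
    if k = 0 then WithLp.toLp 2 (fun _ => c) else WithLp.toLp 2 (fun i => u i) with hvdef
  have hinner : ∀ a b : EuclideanSpace ℝ (Fin n), (inner ℝ a b : ℝ) = ∑ i, a i * b i := by
    intro a b
    simp [PiLp.inner_apply, RCLike.inner_apply, conj_trivial]
    exact Finset.sum_congr rfl fun _ _ => mul_comm _ _
  have hON' : ∀ x y : Fin n, x ∈ ({0, 1} : Set (Fin n)) → y ∈ ({0, 1} : Set (Fin n)) →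
      (inner ℝ (v x) (v y) : ℝ) = if x = y then 1 else 0 := by
    intro x y hx hy
    rcases hx with rfl | hx
    · rcases hy with rfl | hy
      · rw [if_pos rfl, hinner]
        simp only [hvdef, if_pos rfl, PiLp.toLp_apply]
        rw [Finset.sum_congr rfl (fun i _ => hcc)]
        simp [Finset.sum_const, Finset.card_univ]
      · rw [Set.mem_singleton_iff] at hy
        subst hy
        rw [if_neg h01, hinner]
        simp only [hvdef, if_pos rfl, if_neg h01.symm, PiLp.toLp_apply]
        rw [← Finset.mul_sum, husum, mul_zero]
    · rw [Set.mem_singleton_iff] at hx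
      subst hx
      rcases hy with rfl | hy
      · rw [if_neg h01.symm, hinner]
        simp only [hvdef, if_pos rfl, if_neg h01.symm, PiLp.toLp_apply]
        rw [show (∑ i, u i * c) = c * ∑ i, u i from by
          rw [Finset.mul_sum]; exact Finset.sum_congr rfl fun _ _ => by ring]
        rw [husum, mul_zero]
      · rw [Set.mem_singleton_iff] at hy
        subst hy
        rw [if_pos rfl, hinner]
        simp only [hvdef, if_neg h01.symm, PiLp.toLp_apply]
        simpa [pow_two] using hu2
  have hv : Orthonormal ℝ (Set.restrict ({0, 1} : Set (Fin n)) v) := by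
    rw [orthonormal_iff_ite]
    rintro ⟨x, hx⟩ ⟨y, hy⟩
    rw [show Set.restrict {0, 1} v ⟨x, hx⟩ = v x from rfl,
      show Set.restrict {0, 1} v ⟨y, hy⟩ = v y from rfl, hON' x y hx hy]
    simp [Subtype.ext_iff]
  obtain ⟨b, hb⟩ := hv.exists_orthonormalBasis_extension_of_card_eq
    (by simp [finrank_euclideanSpace])
  have hb0 : ∀ i, b 0 i = c := by
    intro i
    have := hb 0 (by simp)
    rw [this, hvdef]
    simp
  have hb1 : ∀ i, b 1 i = u i := by
    intro i
    have := hb 1 (by simp)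
    rw [this, hvdef]
    simp [h01.symm]
  have hON : ∀ k l, ∑ i, b k i * b l i = if k = l then 1 else 0 := by
    intro k l
    have := orthonormal_iff_ite.mp b.orthonormal k l
    rw [Finset.sum_congr rfl fun _ _ => mul_comm _ _]
    simpa [PiLp.inner_apply, RCLike.inner_apply, conj_trivial] using this
  have hS : ∀ k, k ≠ 0 → ∑ j, b k j = 0 := by
    intro k hk
    have h := hON 0 k
    rw [if_neg (Ne.symm hk)] at h
    have h2 : ∑ i, b 0 i * b k i = c * ∑ i, b k i := by
      rw [Finset.mul_sum]
      exact Finset.sum_congr rfl fun i _ => by rw [hb0]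
    rw [h2] at h
    exact (mul_eq_zero.mp h).resolve_left hc0
  have hS0 : ∑ j, b 0 j = n * c := by
    rw [show ∑ j, b 0 j = ∑ _j : Fin n, c from Finset.sum_congr rfl fun j _ => hb0 j]
    simp [Finset.sum_const, Finset.card_univ, mul_comm]
  have hT : ∀ k, ∑ j, u j * b k j = if k = 1 then 1 else 0 := by
    intro k
    have h := hON 1 k
    rw [show ∑ i, b 1 i * b k i = ∑ j, u j * b k j from
      Finset.sum_congr rfl fun i _ => by rw [hb1]] at h
    rw [h]
    by_cases hk : k = 1
    · simp [hk]
    · simp [hk, Ne.symm hk]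
  set V : Matrix (Fin n) (Fin n) ℝ := Matrix.of fun i k => b k i with hVdef
  set d : Fin n → ℝ := fun k => if k = 0 then 0 else if k = 1 then mu else lam with hddef
  have hVtV : Vᵀ * V = 1 := by
    ext k l
    simp only [Matrix.mul_apply, Matrix.transpose_apply, hVdef, Matrix.of_apply,
      Matrix.one_apply]
    exact hON k l
  have hVVt : V * Vᵀ = 1 := mul_eq_one_comm.mp hVtV
  have hAV : A * V = V * diagonal d := by
    ext i k
    rw [Matrix.mul_apply, Matrix.mul_diagonal]
    have hLHS : ∑ j, A i j * V j k
        = lam * b k i - (lam/(n:ℝ)) * (∑ j, b k j) + (mu - lam) * (u i * ∑ j, u j * b k j) := by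
      have expand : ∀ j, A i j * V j k
          = lam * ((if i = j then 1 else 0) * b k j) - (lam/(n:ℝ)) * b k j
            + (mu - lam) * (u i * (u j * b k j)) := by
        intro j
        simp only [hAdef, hVdef, Matrix.of_apply]
        ring
      rw [Finset.sum_congr rfl fun j _ => expand j]
      rw [Finset.sum_add_distrib, Finset.sum_sub_distrib, ← Finset.mul_sum, ← Finset.mul_sum,
        ← Finset.mul_sum, ← Finset.mul_sum]
      congr 2
      simp [ite_mul]
    rw [hLHS]
    have hd0 : d 0 = 0 := by simp [hddef]
    have hd1 : d 1 = mu := by simp [hddef, Ne.symm h01]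
    by_cases hk0 : k = 0
    · subst hk0
      rw [hS0, hT 0, if_neg h01, hd0, show V i 0 = c from hb0 i, hb0 i]
      rw [mul_zero, mul_zero, mul_zero, add_zero]
      have : lam / (n:ℝ) * ((n:ℝ) * c) = lam * c := by
        field_simp
      rw [this, sub_self]
    · by_cases hk1 : k = 1
      · subst hk1
        rw [hS 1 (Ne.symm h01), hT 1, if_pos rfl, hd1, show V i 1 = u i from hb1 i, hb1 i]
        ring
      · have hdk : d k = lam := by simp [hddef, hk0, hk1]
        rw [hS k hk0, hT k, if_neg hk1, hdk, show V i k = b k i from rfl]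
        ring
  have hAfact : A = V * diagonal d * Vᵀ := by
    calc A = A * (V * Vᵀ) := by rw [hVVt, mul_one]
      _ = (A * V) * Vᵀ := by rw [mul_assoc]
      _ = V * diagonal d * Vᵀ := by rw [hAV]
  rw [hAfact, roots_charpoly_conj_diag V Vᵀ hVVt d]
  exact map_d_univ hn lam mu 0 1 h01 d (by simp [hddef]) (by simp [hddef, Ne.symm h01])
    (fun k hk0 hk1 => by simp [hddef, hk0, hk1])

end Helpers

/-- A graph `G` on `n ≥ 3` vertices admits a generalized Laplacian matrix with spectrum
`{0, λ^(n-2), μ}` (where `λ, μ > 0`, `μ ≠ λ`, and `g = (μ - λ)/λ`) if and only if there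
is a unit vector `u` orthogonal to the all-ones vector with `g·uᵢ·uⱼ = 1/n` on non-edges
and `g·uᵢ·uⱼ < 1/n` on edges. -/
theorem stmt14 (n : ℕ) (hn : 3 ≤ n) (G : SimpleGraph (Fin n)) (lam mu : ℝ)
    (hlam : 0 < lam) (hmu : 0 < mu) (hne : mu ≠ lam) :
    (∃ A : Matrix (Fin n) (Fin n) ℝ, IsGenLap G A ∧
        A.charpoly.roots = 0 ::ₘ mu ::ₘ Multiset.replicate (n - 2) lam) ↔
      (∃ u : Fin n → ℝ,
        (∑ i, (u i) ^ 2 = 1) ∧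
        (∑ i, u i = 0) ∧
        (∀ i j, i ≠ j → ¬ G.Adj i j → ((mu - lam) / lam) * u i * u j = 1 / n) ∧
        (∀ i j, G.Adj i j → ((mu - lam) / lam) * u i * u j < 1 / n)) := by
  have hnpos : (0:ℝ) < n := by
    have : (3:ℝ) ≤ n := by exact_mod_cast hn
    linarith
  have hn0 : (n:ℝ) ≠ 0 := hnpos.ne'
  constructor
  · rintro ⟨A, ⟨hsymm, hadj, hnon, hrow⟩, hroots⟩
    obtain ⟨u, hu2, husum, hentry⟩ := forward_dir hn lam mu hlam hmu hne A hsymm hrow hroots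
    refine ⟨u, hu2, husum, ?_, ?_⟩
    · intro i j hij hnadj
      have h := hnon i j hij hnadj
      rw [hentry i j, if_neg hij] at h
      have key : (mu - lam) * (u i * u j) = lam / n := by linarith
      rw [div_mul_eq_mul_div, div_mul_eq_mul_div, div_eq_div_iff hlam.ne' hn0]
      have := congrArg (· * (n:ℝ)) key
      rw [div_mul_cancel₀ _ hn0] at this
      linarith [this]
    · intro i j hGadj
      have h := hadj i j hGadj
      rw [hentry i j, if_neg (G.ne_of_adj hGadj)] at h
      have key : (mu - lam) * (u i * u j) < lam / n := by linarith
      rw [div_mul_eq_mul_div, div_mul_eq_mul_div, div_lt_div_iff₀ hlam hnpos]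
      have h2 : (mu - lam) * (u i * u j) * n < lam / n * n :=
        mul_lt_mul_of_pos_right key hnpos
      rw [div_mul_cancel₀ _ hn0] at h2
      linarith [h2]
  · rintro ⟨u, hu2, husum, hnon, hadj⟩
    refine ⟨Matrix.of fun i j : Fin n =>
      lam * (if i = j then 1 else 0) - lam/(n:ℝ) + (mu - lam) * (u i * u j),
      ⟨?_, ?_, ?_, ?_⟩, backward_dir hn lam mu hlam hmu u hu2 husum⟩
    · ext i j
      simp only [Matrix.transpose_apply, Matrix.of_apply]
      by_cases h : i = j
      · subst h; ring
      · rw [if_neg h, if_neg (Ne.symm h)]; ring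
    · intro i j hGadj
      have hne' : i ≠ j := G.ne_of_adj hGadj
      have h := hadj i j hGadj
      have h2 : lam * ((mu - lam) / lam * u i * u j) < lam * (1 / n) :=
        mul_lt_mul_of_pos_left h hlam
      have h3 : lam * ((mu - lam) / lam * u i * u j) = (mu - lam) * (u i * u j) := by
        field_simp
      have h4 : lam * (1 / (n:ℝ)) = lam / n := by ring
      simp only [Matrix.of_apply, if_neg hne']
      linarith
    · intro i j hij hnadj
      have h := hnon i j hij hnadj
      have h2 : lam * ((mu - lam) / lam * u i * u j) = lam * (1 / n) := by rw [h]
      have h3 : lam * ((mu - lam) / lam * u i * u j) = (mu - lam) * (u i * u j) := by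
        field_simp
      have h4 : lam * (1 / (n:ℝ)) = lam / n := by ring
      simp only [Matrix.of_apply, if_neg hij]
      linarith
    · intro i
      simp only [Matrix.of_apply]
      rw [Finset.sum_add_distrib, Finset.sum_sub_distrib]
      have e1 : ∑ j, lam * (if i = j then 1 else 0) = lam := by
        simp [mul_ite]
      have e2 : ∑ _j : Fin n, lam / (n:ℝ) = lam := by
        rw [Finset.sum_const, Finset.card_univ, Fintype.card_fin, nsmul_eq_mul]
        field_simp
      have e3 : ∑ j, (mu - lam) * (u i * u j) = 0 := by
        rw [← Finset.mul_sum, ← Finset.mul_sum, husum, mul_zero, mul_zero]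
      rw [e1, e2, e3]
      ring
end

section
/- Let λ, μ be positive real numbers. The multiset {0, λ, λ, μ} is Laplacian realizable for the Paw graph if and only if μ ≥ (2 + √3)λ or 0 < μ ≤ (2 − √3)λ. -/
open Matrix

/-- The paw graph: a triangle on vertices `0, 1, 3` with the pendant vertex `2`
attached to `3` (vertices `1,2,3,4` of the paper are `0,1,2,3` here). -/
def pawGraph : SimpleGraph (Fin 4) :=
  SimpleGraph.fromEdgeSet {s(0, 1), s(0, 3), s(1, 3), s(2, 3)}

theorem det_fin_four' {R : Type*} [CommRing R] (A : Matrix (Fin 4) (Fin 4) R) :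
    det A = A 0 0*A 1 1*A 2 2*A 3 3 - A 0 0*A 1 1*A 2 3*A 3 2 - A 0 0*A 1 2*A 2 1*A 3 3
      + A 0 0*A 1 2*A 2 3*A 3 1 + A 0 0*A 1 3*A 2 1*A 3 2 - A 0 0*A 1 3*A 2 2*A 3 1
      - A 0 1*A 1 0*A 2 2*A 3 3 + A 0 1*A 1 0*A 2 3*A 3 2 + A 0 1*A 1 2*A 2 0*A 3 3
      - A 0 1*A 1 2*A 2 3*A 3 0 - A 0 1*A 1 3*A 2 0*A 3 2 + A 0 1*A 1 3*A 2 2*A 3 0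
      + A 0 2*A 1 0*A 2 1*A 3 3 - A 0 2*A 1 0*A 2 3*A 3 1 - A 0 2*A 1 1*A 2 0*A 3 3
      + A 0 2*A 1 1*A 2 3*A 3 0 + A 0 2*A 1 3*A 2 0*A 3 1 - A 0 2*A 1 3*A 2 1*A 3 0
      - A 0 3*A 1 0*A 2 1*A 3 2 + A 0 3*A 1 0*A 2 2*A 3 1 + A 0 3*A 1 1*A 2 0*A 3 2
      - A 0 3*A 1 1*A 2 2*A 3 0 - A 0 3*A 1 2*A 2 0*A 3 1 + A 0 3*A 1 2*A 2 1*A 3 0 := by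
  rw [Matrix.det_succ_row_zero]
  simp only [Fin.sum_univ_four, Matrix.det_fin_three, Matrix.submatrix_apply]
  norm_num [Fin.succAbove, Fin.lt_def]
  simp only [show (Fin.succ 2 : Fin 4) = 3 from rfl,
    show Fin.castSucc (2:Fin 3) = (2:Fin 4) from rfl, show (((3:Fin 4)):ℕ) = 3 from rfl]
  norm_num
  ring

lemma evalCharpoly (A : Matrix (Fin 4) (Fin 4) ℝ) (t : ℝ) :
    A.charpoly.eval t = ((charmatrix A).map (Polynomial.eval t)).det := by
  rw [Matrix.charpoly, ← Polynomial.coe_evalRingHom, RingHom.map_det, RingHom.mapMatrix_apply]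

lemma eval4 (A : Matrix (Fin 4) (Fin 4) ℝ) (t : ℝ) :
    A.charpoly.eval t =
      Matrix.det (Matrix.of ![![t - A 0 0, -A 0 1, -A 0 2, -A 0 3],
        ![-A 1 0, t - A 1 1, -A 1 2, -A 1 3],
        ![-A 2 0, -A 2 1, t - A 2 2, -A 2 3],
        ![-A 3 0, -A 3 1, -A 3 2, t - A 3 3]]) := by
  rw [evalCharpoly]
  congr 1
  ext i j
  fin_cases i <;> fin_cases j <;>
    simp [charmatrix_apply, Matrix.map_apply, Matrix.diagonal_apply]

lemma paw_adj (i j : Fin 4) : pawGraph.Adj i j ↔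
    ((i,j) ∈ ([(0,1),(1,0),(0,3),(3,0),(1,3),(3,1),(2,3),(3,2)] : List (Fin 4 × Fin 4))) := by
  rw [pawGraph, SimpleGraph.fromEdgeSet_adj]
  simp only [Set.mem_insert_iff, Set.mem_singleton_iff, Sym2.eq_iff, List.mem_cons,
    List.mem_singleton, Prod.mk.injEq, Prod.ext_iff]
  fin_cases i <;> fin_cases j <;> decide

set_option maxHeartbeats 2000000 in
lemma conv_alg (a b c d lam mu : ℝ) (hapos : 0 < a) (hbpos : 0 < b) (hcpos : 0 < c)
    (hdpos : 0 < d) (hlam : 0 < lam) (hmu : 0 < mu)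
    (hE1 : 2*(a+b+c+d) = 2*lam + mu)
    (hE2 : 3*(a*b+a*c+b*c+b*d+c*d) + 4*(a*d) = lam^2 + 2*lam*mu)
    (hE3 : 4*d*(a*b+a*c+b*c) = lam^2*mu) :
    (2 + Real.sqrt 3) * lam ≤ mu ∨ mu ≤ (2 - Real.sqrt 3) * lam := by
  have hdet : lam^4 - 2*d*lam^3 - 2*c*lam^3 + 3*c*d*lam^2 - 2*b*lam^3 + 3*b*d*lam^2
      + 3*b*c*lam^2 - 4*b*c*d*lam - 2*a*lam^3 + 4*a*d*lam^2 + 3*a*c*lam^2 - 4*a*c*d*lam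
      + 3*a*b*lam^2 - 4*a*b*d*lam = 0 := by
    linear_combination (-lam^3)*hE1 + (lam^2)*hE2 - lam*hE3
  have htr : (lam^3 - 2*d*lam^2 - 2*c*lam^2 + 3*c*d*lam - b*lam^2 + b*d*lam + b*c*lam - b*c*d - a*lam^2 + 2*a*d*lam + a*c*lam - a*c*d + a*b*lam - a*b*d) + (lam^3 - 2*d*lam^2 - c*lam^2 + c*d*lam - 2*b*lam^2 + 3*b*d*lam + b*c*lam - b*c*d - a*lam^2 + 2*a*d*lam + a*c*lam - a*c*d + a*b*lam - a*b*d) + (lam^3 - d*lam^2 - 2*c*lam^2 + c*d*lam - 2*b*lam^2 + b*d*lam + 3*b*c*lam - b*c*d - 2*a*lam^2 + 2*a*d*lam + 3*a*c*lam - a*c*d + 3*a*b*lam - a*b*d) + (lam^3 - d*lam^2 - c*lam^2 + c*d*lam - b*lam^2 + b*d*lam + b*c*lam - b*c*d - 2*a*lam^2 + 2*a*d*lam + a*c*lam - a*c*d + a*b*lam - a*b*d) = 0 := by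
    linear_combination (-3*lam^2)*hE1 + (2*lam)*hE2 - hE3
  have hJ01 : (lam^3 - 2*d*lam^2 - 2*c*lam^2 + 3*c*d*lam - b*lam^2 + b*d*lam + b*c*lam - b*c*d - a*lam^2 + 2*a*d*lam + a*c*lam - a*c*d + a*b*lam - a*b*d) * (lam^3 - 2*d*lam^2 - c*lam^2 + c*d*lam - 2*b*lam^2 + 3*b*d*lam + b*c*lam - b*c*d - a*lam^2 + 2*a*d*lam + a*c*lam - a*c*d + a*b*lam - a*b*d) - (b*c*lam - b*c*d - a*lam^2 + 2*a*d*lam + a*c*lam - a*c*d + a*b*lam - a*b*d)^2 = 0 := by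
    linear_combination (lam^2 - 2*d*lam - c*lam + c*d - b*lam + b*d) * hdet
  have hJ02 : (lam^3 - 2*d*lam^2 - 2*c*lam^2 + 3*c*d*lam - b*lam^2 + b*d*lam + b*c*lam - b*c*d - a*lam^2 + 2*a*d*lam + a*c*lam - a*c*d + a*b*lam - a*b*d) * (lam^3 - d*lam^2 - 2*c*lam^2 + c*d*lam - 2*b*lam^2 + b*d*lam + 3*b*c*lam - b*c*d - 2*a*lam^2 + 2*a*d*lam + 3*a*c*lam - a*c*d + 3*a*b*lam - a*b*d) - (b*d*lam - b*c*d - a*c*d - a*b*d)^2 = 0 := by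
    linear_combination (lam^2 - d*lam - 2*c*lam + c*d - b*lam + b*c - a*lam + a*d + a*c + a*b) * hdet
  have hJ03 : (lam^3 - 2*d*lam^2 - 2*c*lam^2 + 3*c*d*lam - b*lam^2 + b*d*lam + b*c*lam - b*c*d - a*lam^2 + 2*a*d*lam + a*c*lam - a*c*d + a*b*lam - a*b*d) * (lam^3 - d*lam^2 - c*lam^2 + c*d*lam - b*lam^2 + b*d*lam + b*c*lam - b*c*d - 2*a*lam^2 + 2*a*d*lam + a*c*lam - a*c*d + a*b*lam - a*b*d) - (-(b*lam^2) + b*d*lam + b*c*lam - b*c*d + a*c*lam - a*c*d + a*b*lam - a*b*d)^2 = 0 := by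
    linear_combination (lam^2 - d*lam - c*lam + c*d - a*lam + a*d) * hdet
  have hJ12 : (lam^3 - 2*d*lam^2 - c*lam^2 + c*d*lam - 2*b*lam^2 + 3*b*d*lam + b*c*lam - b*c*d - a*lam^2 + 2*a*d*lam + a*c*lam - a*c*d + a*b*lam - a*b*d) * (lam^3 - d*lam^2 - 2*c*lam^2 + c*d*lam - 2*b*lam^2 + b*d*lam + 3*b*c*lam - b*c*d - 2*a*lam^2 + 2*a*d*lam + 3*a*c*lam - a*c*d + 3*a*b*lam - a*b*d) - (c*d*lam - b*c*d - a*c*d - a*b*d)^2 = 0 := by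
    linear_combination (lam^2 - d*lam - c*lam - 2*b*lam + b*d + b*c - a*lam + a*d + a*c + a*b) * hdet
  have hJ13 : (lam^3 - 2*d*lam^2 - c*lam^2 + c*d*lam - 2*b*lam^2 + 3*b*d*lam + b*c*lam - b*c*d - a*lam^2 + 2*a*d*lam + a*c*lam - a*c*d + a*b*lam - a*b*d) * (lam^3 - d*lam^2 - c*lam^2 + c*d*lam - b*lam^2 + b*d*lam + b*c*lam - b*c*d - 2*a*lam^2 + 2*a*d*lam + a*c*lam - a*c*d + a*b*lam - a*b*d) - (-(c*lam^2) + c*d*lam + b*c*lam - b*c*d + a*c*lam - a*c*d + a*b*lam - a*b*d)^2 = 0 := by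
    linear_combination (lam^2 - d*lam - b*lam + b*d - a*lam + a*d) * hdet
  have hJ23 : (lam^3 - d*lam^2 - 2*c*lam^2 + c*d*lam - 2*b*lam^2 + b*d*lam + 3*b*c*lam - b*c*d - 2*a*lam^2 + 2*a*d*lam + 3*a*c*lam - a*c*d + 3*a*b*lam - a*b*d) * (lam^3 - d*lam^2 - c*lam^2 + c*d*lam - b*lam^2 + b*d*lam + b*c*lam - b*c*d - 2*a*lam^2 + 2*a*d*lam + a*c*lam - a*c*d + a*b*lam - a*b*d) - (-(d*lam^2) + c*d*lam + b*d*lam - b*c*d + 2*a*d*lam - a*c*d - a*b*d)^2 = 0 := by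
    linear_combination (lam^2 - c*lam - b*lam + b*c - 2*a*lam + a*c + a*b) * hdet
  have h1 : ((lam^3 - 2*d*lam^2 - 2*c*lam^2 + 3*c*d*lam - b*lam^2 + b*d*lam + b*c*lam - b*c*d - a*lam^2 + 2*a*d*lam + a*c*lam - a*c*d + a*b*lam - a*b*d) + (lam^3 - 2*d*lam^2 - c*lam^2 + c*d*lam - 2*b*lam^2 + 3*b*d*lam + b*c*lam - b*c*d - a*lam^2 + 2*a*d*lam + a*c*lam - a*c*d + a*b*lam - a*b*d) + (lam^3 - d*lam^2 - 2*c*lam^2 + c*d*lam - 2*b*lam^2 + b*d*lam + 3*b*c*lam - b*c*d - 2*a*lam^2 + 2*a*d*lam + 3*a*c*lam - a*c*d + 3*a*b*lam - a*b*d) + (lam^3 - d*lam^2 - c*lam^2 + c*d*lam - b*lam^2 + b*d*lam + b*c*lam - b*c*d - 2*a*lam^2 + 2*a*d*lam + a*c*lam - a*c*d + a*b*lam - a*b*d))^2 = 0 := by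
    linear_combination ((lam^3 - 2*d*lam^2 - 2*c*lam^2 + 3*c*d*lam - b*lam^2 + b*d*lam + b*c*lam - b*c*d - a*lam^2 + 2*a*d*lam + a*c*lam - a*c*d + a*b*lam - a*b*d) + (lam^3 - 2*d*lam^2 - c*lam^2 + c*d*lam - 2*b*lam^2 + 3*b*d*lam + b*c*lam - b*c*d - a*lam^2 + 2*a*d*lam + a*c*lam - a*c*d + a*b*lam - a*b*d) + (lam^3 - d*lam^2 - 2*c*lam^2 + c*d*lam - 2*b*lam^2 + b*d*lam + 3*b*c*lam - b*c*d - 2*a*lam^2 + 2*a*d*lam + 3*a*c*lam - a*c*d + 3*a*b*lam - a*b*d) + (lam^3 - d*lam^2 - c*lam^2 + c*d*lam - b*lam^2 + b*d*lam + b*c*lam - b*c*d - 2*a*lam^2 + 2*a*d*lam + a*c*lam - a*c*d + a*b*lam - a*b*d))*htr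
  have hsum : (lam^3 - 2*d*lam^2 - 2*c*lam^2 + 3*c*d*lam - b*lam^2 + b*d*lam + b*c*lam - b*c*d - a*lam^2 + 2*a*d*lam + a*c*lam - a*c*d + a*b*lam - a*b*d)^2 + (lam^3 - 2*d*lam^2 - c*lam^2 + c*d*lam - 2*b*lam^2 + 3*b*d*lam + b*c*lam - b*c*d - a*lam^2 + 2*a*d*lam + a*c*lam - a*c*d + a*b*lam - a*b*d)^2 + (lam^3 - d*lam^2 - 2*c*lam^2 + c*d*lam - 2*b*lam^2 + b*d*lam + 3*b*c*lam - b*c*d - 2*a*lam^2 + 2*a*d*lam + 3*a*c*lam - a*c*d + 3*a*b*lam - a*b*d)^2 + (lam^3 - d*lam^2 - c*lam^2 + c*d*lam - b*lam^2 + b*d*lam + b*c*lam - b*c*d - 2*a*lam^2 + 2*a*d*lam + a*c*lam - a*c*d + a*b*lam - a*b*d)^2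
      + 2*((b*c*lam - b*c*d - a*lam^2 + 2*a*d*lam + a*c*lam - a*c*d + a*b*lam - a*b*d)^2 + (b*d*lam - b*c*d - a*c*d - a*b*d)^2 + (-(b*lam^2) + b*d*lam + b*c*lam - b*c*d + a*c*lam - a*c*d + a*b*lam - a*b*d)^2 + (c*d*lam - b*c*d - a*c*d - a*b*d)^2 + (-(c*lam^2) + c*d*lam + b*c*lam - b*c*d + a*c*lam - a*c*d + a*b*lam - a*b*d)^2 + (-(d*lam^2) + c*d*lam + b*d*lam - b*c*d + 2*a*d*lam - a*c*d - a*b*d)^2)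
      = 0 := by
    linear_combination h1 - 2*hJ01 - 2*hJ02 - 2*hJ03 - 2*hJ12 - 2*hJ13 - 2*hJ23
  have z0 : (lam^3 - 2*d*lam^2 - 2*c*lam^2 + 3*c*d*lam - b*lam^2 + b*d*lam + b*c*lam - b*c*d - a*lam^2 + 2*a*d*lam + a*c*lam - a*c*d + a*b*lam - a*b*d) = 0 := by
    have h2 : (lam^3 - 2*d*lam^2 - 2*c*lam^2 + 3*c*d*lam - b*lam^2 + b*d*lam + b*c*lam - b*c*d - a*lam^2 + 2*a*d*lam + a*c*lam - a*c*d + a*b*lam - a*b*d)^2 ≤ 0 := by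
      linarith [hsum, sq_nonneg (lam^3 - 2*d*lam^2 - c*lam^2 + c*d*lam - 2*b*lam^2 + 3*b*d*lam + b*c*lam - b*c*d - a*lam^2 + 2*a*d*lam + a*c*lam - a*c*d + a*b*lam - a*b*d), sq_nonneg (lam^3 - d*lam^2 - 2*c*lam^2 + c*d*lam - 2*b*lam^2 + b*d*lam + 3*b*c*lam - b*c*d - 2*a*lam^2 + 2*a*d*lam + 3*a*c*lam - a*c*d + 3*a*b*lam - a*b*d), sq_nonneg (lam^3 - d*lam^2 - c*lam^2 + c*d*lam - b*lam^2 + b*d*lam + b*c*lam - b*c*d - 2*a*lam^2 + 2*a*d*lam + a*c*lam - a*c*d + a*b*lam - a*b*d), sq_nonneg (b*c*lam - b*c*d - a*lam^2 + 2*a*d*lam + a*c*lam - a*c*d + a*b*lam - a*b*d), sq_nonneg (b*d*lam - b*c*d - a*c*d - a*b*d), sq_nonneg (-(b*lam^2) + b*d*lam + b*c*lam - b*c*d + a*c*lam - a*c*d + a*b*lam - a*b*d), sq_nonneg (c*d*lam - b*c*d - a*c*d - a*b*d), sq_nonneg (-(c*lam^2) + c*d*lam + b*c*lam - b*c*d +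 a*c*lam - a*c*d + a*b*lam - a*b*d), sq_nonneg (-(d*lam^2) + c*d*lam + b*d*lam - b*c*d + 2*a*d*lam - a*c*d - a*b*d)]
    exact pow_eq_zero_iff (two_ne_zero) |>.mp (le_antisymm h2 (sq_nonneg _))
  have z1 : (lam^3 - 2*d*lam^2 - c*lam^2 + c*d*lam - 2*b*lam^2 + 3*b*d*lam + b*c*lam - b*c*d - a*lam^2 + 2*a*d*lam + a*c*lam - a*c*d + a*b*lam - a*b*d) = 0 := by
    have h2 : (lam^3 - 2*d*lam^2 - c*lam^2 + c*d*lam - 2*b*lam^2 + 3*b*d*lam + b*c*lam - b*c*d - a*lam^2 + 2*a*d*lam + a*c*lam - a*c*d + a*b*lam - a*b*d)^2 ≤ 0 := by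
      linarith [hsum, sq_nonneg (lam^3 - 2*d*lam^2 - 2*c*lam^2 + 3*c*d*lam - b*lam^2 + b*d*lam + b*c*lam - b*c*d - a*lam^2 + 2*a*d*lam + a*c*lam - a*c*d + a*b*lam - a*b*d), sq_nonneg (lam^3 - d*lam^2 - 2*c*lam^2 + c*d*lam - 2*b*lam^2 + b*d*lam + 3*b*c*lam - b*c*d - 2*a*lam^2 + 2*a*d*lam + 3*a*c*lam - a*c*d + 3*a*b*lam - a*b*d), sq_nonneg (lam^3 - d*lam^2 - c*lam^2 + c*d*lam - b*lam^2 + b*d*lam + b*c*lam - b*c*d - 2*a*lam^2 + 2*a*d*lam + a*c*lam - a*c*d + a*b*lam - a*b*d), sq_nonneg (b*c*lam - b*c*d - a*lam^2 + 2*a*d*lam + a*c*lam - a*c*d + a*b*lam - a*b*d), sq_nonneg (b*d*lam - b*c*d - a*c*d - a*b*d), sq_nonneg (-(b*lam^2) + b*d*lam + b*c*lam - b*c*d + a*c*lam - a*c*d + a*b*lam - a*b*d), sq_nonneg (c*d*lam - b*c*d - a*c*d - a*b*d), sq_nonneg (-(c*lam^2) + c*d*lam + b*c*lam - b*c*d +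 a*c*lam - a*c*d + a*b*lam - a*b*d), sq_nonneg (-(d*lam^2) + c*d*lam + b*d*lam - b*c*d + 2*a*d*lam - a*c*d - a*b*d)]
    exact pow_eq_zero_iff (two_ne_zero) |>.mp (le_antisymm h2 (sq_nonneg _))
  have z01 : (b*c*lam - b*c*d - a*lam^2 + 2*a*d*lam + a*c*lam - a*c*d + a*b*lam - a*b*d) = 0 := by
    have h2 : (b*c*lam - b*c*d - a*lam^2 + 2*a*d*lam + a*c*lam - a*c*d + a*b*lam - a*b*d)^2 = 0 := by linear_combination -hJ01 + (lam^3 - 2*d*lam^2 - c*lam^2 + c*d*lam - 2*b*lam^2 + 3*b*d*lam + b*c*lam - b*c*d - a*lam^2 + 2*a*d*lam + a*c*lam - a*c*d + a*b*lam - a*b*d)*z0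
    exact pow_eq_zero_iff (two_ne_zero) |>.mp h2
  clear hdet htr hJ01 hJ02 hJ03 hJ12 hJ13 hJ23 h1 hsum
  have hzb : (a+b-lam)*((d-lam)*(b+c+d-lam) - d^2) = b^2*(d-lam) := by
    linear_combination -z1
  have hzc : (a+c-lam)*((d-lam)*(b+c+d-lam) - d^2) = c^2*(d-lam) := by
    linear_combination -z0
  have hza : a*((d-lam)*(b+c+d-lam) - d^2) = -(b*c*(d-lam)) := by
    linear_combination -z01
  clear z0 z1 z01
  have hKne : (d-lam)*(b+c+d-lam) - d^2 ≠ 0 := by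
    intro h0
    have h4 : b*c*(d-lam) = 0 := by linear_combination hza - a*h0
    have h5 : d - lam = 0 := by
      rcases mul_eq_zero.mp h4 with h6 | h6
      · rcases mul_eq_zero.mp h6 with h7 | h7
        · exact absurd h7 (ne_of_gt hbpos)
        · exact absurd h7 (ne_of_gt hcpos)
      · exact h6
    have h8 : d^2 = 0 := by linear_combination -h0 + (b+c+d-lam)*h5
    exact absurd (pow_eq_zero_iff (two_ne_zero) |>.mp h8) (ne_of_gt hdpos)
  have h6 : ((d-lam)*(b+c+d-lam) - d^2) * (a*c + b*c - c*lam + a*b) = 0 := by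
    linear_combination c*hzb + b*hza
  have e1 : a*c + b*c - c*lam + a*b = 0 := (mul_eq_zero.mp h6).resolve_left hKne
  have h7 : ((d-lam)*(b+c+d-lam) - d^2) * (a*b + b*c - b*lam + a*c) = 0 := by
    linear_combination b*hzc + c*hza
  have e2 : a*b + b*c - b*lam + a*c = 0 := (mul_eq_zero.mp h7).resolve_left hKne
  clear hzb hzc hza hKne h6 h7
  have h8 : lam*(b-c) = 0 := by linear_combination e1 - e2
  have hbc : b = c := by
    have := (mul_eq_zero.mp h8).resolve_left (ne_of_gt hlam)
    linarith [this]
  have h9 : b*(2*a+b-lam) = 0 := by linear_combination e1 + (a + b - lam)*hbc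
  have hlam2 : lam = 2*a+b := by
    have := (mul_eq_zero.mp h9).resolve_left (ne_of_gt hbpos)
    linarith [this]
  have hmu2 : lam + mu = 3*b + 2*d := by linear_combination -hE1 - hlam2 - 2*hbc
  have h10 : lam*(lam*mu - 4*b*d) = 0 := by
    linear_combination -hE3 - (4*a*d+4*b*d)*hbc - 4*b*d*hlam2
  have hprod : lam*mu = 4*b*d := by
    have := (mul_eq_zero.mp h10).resolve_left (ne_of_gt hlam)
    linarith [this]
  have hkey : mu^2 - 4*lam*mu + lam^2 = (3*b-2*d)^2 := by
    linear_combination (lam+mu+3*b+2*d)*hmu2 - 6*hprod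
  clear e1 e2 h8 h9 h10 hmu2 hprod hE1 hE2 hE3
  have h3 : (Real.sqrt 3)^2 = 3 := Real.sq_sqrt (by norm_num)
  have h3' : 0 ≤ Real.sqrt 3 := Real.sqrt_nonneg 3
  by_cases hc2 : mu ≤ (2 - Real.sqrt 3)*lam
  · exact Or.inr hc2
  · left
    push_neg at hc2
    by_contra hcon
    push_neg at hcon
    nlinarith [hkey, h3, sq_nonneg (3*b-2*d),
      mul_pos (show 0 < (2+Real.sqrt 3)*lam - mu by linarith)
        (show 0 < mu - (2-Real.sqrt 3)*lam by linarith)]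

set_option maxHeartbeats 2000000 in
/-- For `λ, μ > 0`, the multiset `{0, λ, λ, μ}` is Laplacian realizable for the paw graph
if and only if `μ ≥ (2 + √3)λ` or `μ ≤ (2 − √3)λ`. -/
theorem stmt15 (lam mu : ℝ) (hlam : 0 < lam) (hmu : 0 < mu) :
    (∃ A : Matrix (Fin 4) (Fin 4) ℝ, IsGenLap pawGraph A ∧
        A.charpoly.roots = (0 ::ₘ lam ::ₘ lam ::ₘ {mu})) ↔
      ((2 + Real.sqrt 3) * lam ≤ mu ∨ mu ≤ (2 - Real.sqrt 3) * lam) := by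
  constructor
  · intro H
    obtain ⟨A, ⟨hsym, hneg, hzero, hrow⟩, hroots⟩ := H
    have hs : ∀ i j, A j i = A i j := by
      intro i j
      have := congrFun (congrFun hsym i) j
      simpa [Matrix.transpose_apply] using this
    set a : ℝ := -A 0 1 with hadef
    set b : ℝ := -A 0 3 with hbdef
    set c : ℝ := -A 1 3 with hcdef
    set d : ℝ := -A 2 3 with hddef
    have hapos : 0 < a := by
      have := hneg 0 1 ((paw_adj 0 1).mpr (by decide)); rw [hadef]; linarith
    have hbpos : 0 < b := by
      have := hneg 0 3 ((paw_adj 0 3).mpr (by decide)); rw [hbdef]; linarith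
    have hcpos : 0 < c := by
      have := hneg 1 3 ((paw_adj 1 3).mpr (by decide)); rw [hcdef]; linarith
    have hdpos : 0 < d := by
      have := hneg 2 3 ((paw_adj 2 3).mpr (by decide)); rw [hddef]; linarith
    have e01 : A 0 1 = -a := by rw [hadef]; ring
    have e03 : A 0 3 = -b := by rw [hbdef]; ring
    have e13 : A 1 3 = -c := by rw [hcdef]; ring
    have e23 : A 2 3 = -d := by rw [hddef]; ring
    have e02 : A 0 2 = 0 := hzero 0 2 (by decide) (by rw [paw_adj]; decide)
    have e12 : A 1 2 = 0 := hzero 1 2 (by decide) (by rw [paw_adj]; decide)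
    have e10 : A 1 0 = -a := by rw [hs 0 1]; exact e01
    have e30 : A 3 0 = -b := by rw [hs 0 3]; exact e03
    have e31 : A 3 1 = -c := by rw [hs 1 3]; exact e13
    have e32 : A 3 2 = -d := by rw [hs 2 3]; exact e23
    have e20 : A 2 0 = 0 := by rw [hs 0 2]; exact e02
    have e21 : A 2 1 = 0 := by rw [hs 1 2]; exact e12
    have r0 := hrow 0
    have r1 := hrow 1
    have r2 := hrow 2
    have r3 := hrow 3
    rw [Fin.sum_univ_four] at r0 r1 r2 r3
    have e00 : A 0 0 = a + b := by linear_combination r0 - e01 - e02 - e03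
    have e11 : A 1 1 = a + c := by linear_combination r1 - e10 - e12 - e13
    have e22 : A 2 2 = d := by linear_combination r2 - e20 - e21 - e23
    have e33 : A 3 3 = b + c + d := by linear_combination r3 - e30 - e31 - e32
    have hcard : A.charpoly.roots.card = A.charpoly.natDegree := by
      rw [hroots, Matrix.charpoly_natDegree_eq_dim]
      rfl
    have hpoly := Polynomial.Splits.eq_prod_roots_of_monic
      (Polynomial.splits_iff_card_roots.mpr hcard) (A.charpoly_monic)
    rw [hroots] at hpoly
    have hev : ∀ t : ℝ, t*(t-lam)^2*(t-mu) = t^4 - 2*d*t^3 - 2*c*t^3 + 3*c*d*t^2 - 2*b*t^3 + 3*b*d*t^2 + 3*b*c*t^2 - 4*b*c*d*t - 2*a*t^3 + 4*a*d*t^2 + 3*a*c*t^2 - 4*a*c*d*t + 3*a*b*t^2 - 4*a*b*d*t := by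
      intro t
      have h := eval4 A t
      rw [hpoly, det_fin_four'] at h
      simp only [Multiset.map_cons, Multiset.map_singleton, Multiset.prod_cons,
        Multiset.prod_singleton, Polynomial.eval_mul, Polynomial.eval_sub, Polynomial.eval_pow,
        Polynomial.eval_X, Polynomial.eval_C, Matrix.of_apply, Matrix.cons_val',
        Matrix.cons_val_zero, Matrix.cons_val_one, Matrix.head_cons, Matrix.empty_val',
        Matrix.cons_val_fin_one, Matrix.head_fin_const, Matrix.cons_val_two,
        Matrix.cons_val_three, Matrix.tail_cons] at h
      rw [e00, e01, e02, e03, e10, e11, e12, e13, e20, e21, e22, e23, e30, e31, e32, e33] at h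
      linear_combination h
    have hev1 := hev 1
    have hev2 := hev 2
    have hevm1 := hev (-1)
    have hevm2 := hev (-2)
    refine conv_alg a b c d lam mu hapos hbpos hcpos hdpos hlam hmu ?_ ?_ ?_
    · linear_combination (-1/12)*hevm2 + (1/12)*hev2 + (1/6)*hevm1 - (1/6)*hev1
    · linear_combination (-1/2)*hev1 - (1/2)*hevm1
    · linear_combination (-2/3)*hevm1 + (2/3)*hev1 + (1/12)*hevm2 - (1/12)*hev2
  · intro hyp
    have h3 : (Real.sqrt 3)^2 = 3 := Real.sq_sqrt (by norm_num)
    have h3' : 0 ≤ Real.sqrt 3 := Real.sqrt_nonneg 3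
    have hsl : 0 ≤ Real.sqrt 3 * lam := mul_nonneg h3' hlam.le
    have hR : 0 ≤ lam^2 - 4*lam*mu + mu^2 := by
      rcases hyp with h | h
      · nlinarith [h3, mul_nonneg (show 0 ≤ mu-(2+Real.sqrt 3)*lam by linarith)
          (show 0 ≤ mu-(2-Real.sqrt 3)*lam by linarith)]
      · nlinarith [h3, mul_nonneg (show 0 ≤ (2+Real.sqrt 3)*lam - mu by linarith)
          (show 0 ≤ (2-Real.sqrt 3)*lam - mu by linarith)]
    set D : ℝ := Real.sqrt (lam^2 - 4*lam*mu + mu^2) with hDdef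
    have hD2 : D^2 = lam^2 - 4*lam*mu + mu^2 := Real.sq_sqrt hR
    have hD0 : 0 ≤ D := Real.sqrt_nonneg _
    set b : ℝ := (lam + mu - D)/6 with hb
    set d : ℝ := (lam + mu + D)/4 with hd
    set a : ℝ := (lam - b)/2 with ha
    have hDlt : D < lam + mu := by nlinarith [mul_pos hlam hmu]
    have hbpos : 0 < b := by rw [hb]; linarith
    have hdpos : 0 < d := by rw [hd]; linarith
    have hapos : 0 < a := by
      rw [ha, hb]
      by_cases hc : mu ≤ 4*lam
      · nlinarith
      · nlinarith [hD2, hD0, mul_pos hlam (show (0:ℝ) < mu - 4*lam by linarith)]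
    refine ⟨!![a+b, -a, 0, -b; -a, a+b, 0, -b; 0, 0, d, -d; -b, -b, -d, 2*b+d],
      ⟨?_, ?_, ?_, ?_⟩, ?_⟩
    · show Matrix.transpose _ = _
      ext i j
      fin_cases i <;> fin_cases j <;> simp [Matrix.transpose_apply]
    · intro i j hadj
      rw [paw_adj] at hadj
      fin_cases hadj <;> simp <;> linarith
    · intro i j hne hnadj
      rw [paw_adj] at hnadj
      fin_cases i <;> fin_cases j <;> simp_all
    · intro i
      fin_cases i <;> simp [Fin.sum_univ_four] <;> ring
    · have hpolyF : (!![a+b, -a, 0, -b; -a, a+b, 0, -b; 0, 0, d, -d; -b, -b, -d, 2*b+d]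
          : Matrix (Fin 4) (Fin 4) ℝ).charpoly
          = ((0 ::ₘ lam ::ₘ lam ::ₘ {mu}).map fun r => Polynomial.X - Polynomial.C r).prod := by
        apply Polynomial.funext
        intro t
        rw [eval4, det_fin_four']
        simp only [Multiset.map_cons, Multiset.map_singleton, Multiset.prod_cons,
          Multiset.prod_singleton, Polynomial.eval_mul, Polynomial.eval_sub, Polynomial.eval_X,
          Polynomial.eval_C, Matrix.of_apply, Matrix.cons_val', Matrix.cons_val_zero,
          Matrix.cons_val_one, Matrix.head_cons, Matrix.empty_val', Matrix.cons_val_fin_one,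
          Matrix.head_fin_const, Matrix.cons_val_two, Matrix.cons_val_three, Matrix.tail_cons]
        linear_combination ((-2)*t^3 + (4)*d*t^2 + (6)*b*t^2 + (-8)*b*d*t) * ha +
          ((3)*t^2*lam + (-3)*t^3 + (-4)*d*t*lam + (4)*d*t^2) * hb +
          ((2/3)*t*lam*D + (-2/3)*t*lam*mu + (-2/3)*t*lam^2 + (-2/3)*t^2*D + (2/3)*t^2*mu +
            (8/3)*t^2*lam + (-2)*t^3) * hd +
          ((1/6)*t*lam + (-1/6)*t^2) * hD2
      rw [hpolyF, Polynomial.roots_multiset_prod_X_sub_C]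
end
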